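/- arXiv:2204.07559 — 8 statements merged into one kernel-verified Lean document; each statement's English description precedes it below -/
import Mathlib

section
/- Let A and B be finite non-empty subsets of the integers with |A| ≥ |B|. Then there exist elements b₁, b₂, b₃ ∈ B such that |A + {b₁, b₂, b₃}| ≥ |A| + |B| - 1. -/
open Finset Pointwise

/-!
Let `m = min B`, `n = max B` and `d = n - m`. Every residue class mod `d` met by `A` has a largest
element `a`, and `a + n ∉ A + m`; so `A + {m, n}` has at least `|A| + r` elements, `r` being the
number of residues of `A` mod `d`. A third summand `b` adds every `a + b` for which
`(a + b - m) mod d` is not one of these `r` residues. The elements of `B \ {n}` lie in `[m, n)`,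
so for fixed `a` they give distinct residues, and at least `|B| - 1 - r` of them add `a + b`.
Double counting over `A`, with `|B| - 1 ≤ |A|`, yields one `b` that adds `|B| - 1 - r` elements.
-/

lemma card_add_card_image_emod_le_card_add_pair {m n : ℤ} (hmn : m < n) (A : Finset ℤ) :
    #A + #(A.image (· % (n - m))) ≤ #(A + {m, n}) := by
  set d := n - m
  set E := A.filter (· + d ∉ A)
  have hres : A.image (· % d) ⊆ E.image (· % d) := by
    simp only [subset_iff, mem_image, forall_exists_index, and_imp]
    rintro _ a ha rfl
    set F := A.filter (· % d = a % d)
    have hF : F.Nonempty := ⟨a, mem_filter.2 ⟨ha, rfl⟩⟩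
    obtain ⟨hmaxA, hmax⟩ := mem_filter.1 (F.max'_mem hF)
    refine ⟨F.max' hF, mem_filter.2 ⟨hmaxA, fun hA => ?_⟩, hmax⟩
    have : F.max' hF + d ∈ F := mem_filter.2 ⟨hA, by rw [Int.add_emod_right, hmax]⟩
    linarith [F.le_max' _ this]
  have hdisj : Disjoint (A.image (· + m)) (E.image (· + n)) := by
    refine disjoint_left.2 fun x hx hx' => ?_
    obtain ⟨a, ha, rfl⟩ := mem_image.1 hx
    obtain ⟨e, he, hea⟩ := mem_image.1 hx'
    exact (mem_filter.1 he).2 (by convert ha using 1; omega)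
  have hsub : A.image (· + m) ∪ E.image (· + n) ⊆ A + {m, n} := by
    refine union_subset ?_ ?_ <;> intro x hx <;> obtain ⟨a, ha, rfl⟩ := mem_image.1 hx
    · exact add_mem_add ha (mem_insert_self m {n})
    · exact add_mem_add (mem_filter.1 ha).1 (mem_insert_of_mem (mem_singleton_self n))
  calc #A + #(A.image (· % d))
      ≤ #(A.image (· + m)) + #(E.image (· + n)) := by
        rw [card_image_of_injective _ (add_left_injective m),
          card_image_of_injective _ (add_left_injective n)]
        exact Nat.add_le_add_left ((card_le_card hres).trans card_image_le) _
    _ = #(A.image (· + m) ∪ E.image (· + n)) := (card_union_of_disjoint hdisj).symm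
    _ ≤ #(A + {m, n}) := card_le_card hsub

lemma card_add_pair_add_card_filter_le_card_add_triple (A : Finset ℤ) (m n b : ℤ) :
    #(A + {m, n}) + #(A.filter fun a => (a + b - m) % (n - m) ∉ A.image (· % (n - m))) ≤
      #(A + {m, b, n}) := by
  set N := A.filter fun a => (a + b - m) % (n - m) ∉ A.image (· % (n - m))
  have hdisj : Disjoint (A + {m, n}) (N.image (· + b)) := by
    refine disjoint_left.2 fun y hy hy' => ?_
    obtain ⟨a, ha, c, hc, rfl⟩ := mem_add.1 hy
    obtain ⟨x, hx, hxa⟩ := mem_image.1 hy'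
    refine (mem_filter.1 hx).2 (mem_image.2 ⟨a, ha, ?_⟩)
    rcases mem_insert.1 hc with rfl | hc
    · rw [hxa, add_sub_cancel_right]
    · rw [hxa, mem_singleton.1 hc, add_sub_assoc, Int.add_emod_right]
  have hsub : A + {m, n} ∪ N.image (· + b) ⊆ A + {m, b, n} := by
    refine union_subset (add_subset_add_left ?_) ?_
    · exact insert_subset_insert m (subset_insert b {n})
    · intro x hx
      obtain ⟨a, ha, rfl⟩ := mem_image.1 hx
      exact add_mem_add (mem_filter.1 ha).1 (mem_insert_of_mem (mem_insert_self b {n}))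
  calc #(A + {m, n}) + #N = #(A + {m, n}) + #(N.image (· + b)) := by
        rw [card_image_of_injective _ (add_left_injective b)]
    _ = #(A + {m, n} ∪ N.image (· + b)) := (card_union_of_disjoint hdisj).symm
    _ ≤ #(A + {m, b, n}) := card_le_card hsub

lemma card_sub_card_le_card_filter_emod_notMem {m n : ℤ} {s : Finset ℤ} (hs : s ⊆ Ico m n)
    (R : Finset ℤ) (a : ℤ) :
    #s - #R ≤ #(s.filter fun b => (a + b - m) % (n - m) ∉ R) := by
  have hmem : #(s.filter fun b => (a + b - m) % (n - m) ∈ R) ≤ #R := by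
    refine card_le_card_of_injOn (fun b => (a + b - m) % (n - m))
      (fun b hb => (mem_filter.1 hb).2) ?_
    intro b hb b' hb' h
    have hb := mem_Ico.1 (hs (mem_filter.1 hb).1)
    have hb' := mem_Ico.1 (hs (mem_filter.1 hb').1)
    have hdvd : n - m ∣ b' - b := by
      have h : a + b - m ≡ a + b' - m [ZMOD n - m] := h
      simpa only [sub_sub_sub_cancel_right, add_sub_add_left_eq_sub] using h.dvd
    have hzero := Int.eq_zero_of_abs_lt_dvd hdvd (abs_lt.2 ⟨by omega, by omega⟩)
    omega
  have hsplit := card_filter_add_card_filter_not (s := s) fun b => (a + b - m) % (n - m) ∈ R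
  omega

lemma exists_le_card_filter_of_le_card_filter {α β : Type*} {s : Finset α} {t : Finset β}
    (r : α → β → Prop) [∀ a b, Decidable (r a b)] {k : ℕ} (ht : t.Nonempty)
    (hts : #t ≤ #s) (h : ∀ a ∈ s, k ≤ #(t.filter (r a))) :
    ∃ b ∈ t, k ≤ #(s.filter (r · b)) := by
  refine exists_le_of_sum_le ht ?_
  calc ∑ _ ∈ t, k = #t * k := by rw [sum_const, smul_eq_mul]
    _ ≤ #s * k := Nat.mul_le_mul_right k hts
    _ = ∑ _ ∈ s, k := by rw [sum_const, smul_eq_mul]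
    _ ≤ ∑ a ∈ s, #(t.filter (r a)) := sum_le_sum h
    _ = ∑ b ∈ t, #(s.filter (r · b)) := sum_card_bipartiteAbove_eq_sum_card_bipartiteBelow r

theorem stmt_0_general (A B : Finset ℤ) (hB : B.Nonempty)
    (hcard : B.card ≤ A.card) :
    ∃ b₁ ∈ B, ∃ b₂ ∈ B, ∃ b₃ ∈ B,
      A.card + B.card - 1 ≤ (A + ({b₁, b₂, b₃} : Finset ℤ)).card := by
  obtain ⟨b, rfl⟩ | hB₂ := hB.exists_eq_singleton_or_nontrivial
  · exact ⟨b, mem_singleton_self b, b, mem_singleton_self b, b, mem_singleton_self b, by simp⟩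
  set m := B.min' hB
  set n := B.max' hB
  have hmn : m < n := B.min'_lt_max'_of_card (one_lt_card_iff_nontrivial.2 hB₂)
  have hB' : B.erase n ⊆ Ico m n := fun b hb =>
    mem_Ico.2 ⟨B.min'_le b (mem_of_mem_erase hb),
      (B.le_max' b (mem_of_mem_erase hb)).lt_of_ne (ne_of_mem_erase hb)⟩
  have hcard' : #(B.erase n) = #B - 1 := card_erase_of_mem (B.max'_mem hB)
  obtain ⟨b, hb, hnew⟩ := exists_le_card_filter_of_le_card_filter (s := A) (t := B.erase n)
    (fun a b => (a + b - m) % (n - m) ∉ A.image (· % (n - m)))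
    ⟨m, mem_erase.2 ⟨hmn.ne, B.min'_mem hB⟩⟩ (by omega)
    fun a _ => card_sub_card_le_card_filter_emod_notMem hB' _ a
  refine ⟨m, B.min'_mem hB, b, mem_of_mem_erase hb, n, B.max'_mem hB, ?_⟩
  have hpair := card_add_card_image_emod_le_card_add_pair hmn A
  have htriple := card_add_pair_add_card_filter_le_card_add_triple A m n b
  omega

theorem stmt_0 (A B : Finset ℤ) (hA : A.Nonempty) (hB : B.Nonempty)
    (hcard : B.card ≤ A.card) :
    ∃ b₁ ∈ B, ∃ b₂ ∈ B, ∃ b₃ ∈ B,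
      A.card + B.card - 1 ≤ (A + ({b₁, b₂, b₃} : Finset ℤ)).card :=
  stmt_0_general A B hB hcard
end

section
/- Let A be a finite non-empty subset of ℤ and let m be a positive integer. Let π_m : ℤ → ℤ/mℤ be the canonical projection. Then |A ∪ (A + m)| ≥ |A| + |π_m(A)|. -/
/-!
Every residue class met by `A` contains a largest element `a` of `A`, and then `a + m` lies in
`(A + m) \ A` and has the same residue. So reduction mod `m` maps `(A + m) \ A` onto `π_m(A)`,
and `|A ∪ (A + m)| = |A| + |(A + m) \ A| ≥ |A| + |π_m(A)|`.
-/

open Finset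

theorem Finset.card_image_le_card_image_sdiff_of_lt_of_comp_eq {α β : Type*} [LinearOrder α]
    [DecidableEq β] (A : Finset α) (s : α → α) (f : α → β) (hs : ∀ x, x < s x)
    (hf : ∀ x, f (s x) = f x) : #(A.image f) ≤ #(A.image s \ A) := by
  refine card_le_card_of_surjOn f ?_
  rintro _ hb
  obtain ⟨a, ha, rfl⟩ := mem_image.1 (mem_coe.1 hb)
  obtain ⟨top, htop, htop_max⟩ :=
    (A.filter (f · = f a)).exists_max_image id ⟨a, mem_filter.2 ⟨ha, rfl⟩⟩
  obtain ⟨htopA, htop_fiber⟩ := mem_filter.1 htop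
  refine ⟨s top, mem_sdiff.2 ⟨mem_image_of_mem s htopA, fun hsA => ?_⟩, (hf top).trans htop_fiber⟩
  exact (hs top).not_ge (htop_max _ (mem_filter.2 ⟨hsA, (hf top).trans htop_fiber⟩))

theorem stmt_1_general (A : Finset ℤ) (m : ℕ) (hm : 0 < m) :
    A.card + (A.image (fun x : ℤ => (x : ZMod m))).card
      ≤ (A ∪ A.image (fun x => x + (m : ℤ))).card := by
  have h_residues := A.card_image_le_card_image_sdiff_of_lt_of_comp_eq (· + (m : ℤ))
    (fun x : ℤ => (x : ZMod m)) (fun x => by omega) (fun x => by simp)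
  rw [union_comm, ← card_sdiff_add_card]
  omega

theorem stmt_1 (A : Finset ℤ) (hA : A.Nonempty) (m : ℕ) (hm : 0 < m) :
    A.card + (A.image (fun x : ℤ => (x : ZMod m))).card
      ≤ (A ∪ A.image (fun x => x + (m : ℤ))).card :=
  stmt_1_general A m hm
end

section
/- Let A and B be finite non-empty subsets of ℤ with min B = 0 and max B = m > 0. Let π_m : ℤ → ℤ/mℤ be the canonical projection, and set Ã = π_m(A), B̃ = π_m(B). If b is chosen uniformly at random from B \ {m}, then the expected size of (A + b) \ π_m⁻¹(Ã) is at least |A| · max(0, (|B̃| - |Ã|)/|B̃|). -/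
open Finset

theorem stmt_2 (A B : Finset ℤ) (hA : A.Nonempty) (hB : B.Nonempty) (m : ℕ) (hm : 0 < m)
    (hmin : B.min' hB = 0) (hmax : B.max' hB = (m : ℤ)) :
    let Atil : Finset (ZMod m) := A.image (fun x : ℤ => (x : ZMod m))
    let Btil : Finset (ZMod m) := B.image (fun x : ℤ => (x : ZMod m))
    (A.card : ℝ) * max 0 (((Btil.card : ℝ) - Atil.card) / Btil.card)
      ≤ (∑ b ∈ B.erase (m : ℤ),
          (((A.image (fun x => x + b)).filter
            (fun x : ℤ => ((x : ZMod m) ∉ Atil))).card : ℝ)) / (B.erase (m : ℤ)).card := by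
  intro Atil Btil
  set E := B.erase (m : ℤ) with hE
  have hmB : (m : ℤ) ∈ B := hmax ▸ B.max'_mem hB
  have h0B : (0 : ℤ) ∈ B := hmin ▸ B.min'_mem hB
  have h0ne : (0 : ℤ) ≠ (m : ℤ) := by
    intro h; exact absurd h.symm (by exact_mod_cast hm.ne')
  have h0E : (0 : ℤ) ∈ E := Finset.mem_erase.mpr ⟨h0ne, h0B⟩
  have hrange : ∀ x ∈ E, 0 ≤ x ∧ x < (m : ℤ) := by
    intro x hx
    rcases Finset.mem_erase.mp hx with ⟨hne, hxB⟩
    refine ⟨hmin ▸ B.min'_le x hxB, lt_of_le_of_ne (hmax ▸ B.le_max' x hxB) hne⟩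
  have hinj : Set.InjOn (fun x : ℤ => (x : ZMod m)) E := by
    intro x hx y hy h
    have hx' := hrange x hx
    have hy' := hrange y hy
    have hmod : x % (m : ℤ) = y % (m : ℤ) := (ZMod.intCast_eq_intCast_iff' x y m).mp h
    rwa [Int.emod_eq_of_lt hx'.1 hx'.2, Int.emod_eq_of_lt hy'.1 hy'.2] at hmod
  have himg : E.image (fun x : ℤ => (x : ZMod m)) = Btil := by
    apply Finset.Subset.antisymm
    · exact Finset.image_subset_image (Finset.erase_subset _ _)
    · intro z hz
      rcases Finset.mem_image.mp hz with ⟨x, hxB, hxz⟩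
      by_cases hxm : x = (m : ℤ)
      · refine Finset.mem_image.mpr ⟨0, h0E, ?_⟩
        rw [← hxz, hxm]
        push_cast
        simp
      · exact Finset.mem_image.mpr ⟨x, Finset.mem_erase.mpr ⟨hxm, hxB⟩, hxz⟩
  have hcardE : E.card = Btil.card := by
    rw [← himg, Finset.card_image_of_injOn hinj]
  -- key per-element bound
  have key : ∀ a : ℤ, Btil.card ≤
      (E.filter (fun b => ((a + b : ℤ) : ZMod m) ∉ Atil)).card + Atil.card := by
    intro a
    have hsplit := Finset.card_filter_add_card_filter_not
      (s := E) (p := fun b => ((a + b : ℤ) : ZMod m) ∉ Atil)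
    have hG : (E.filter (fun b => ¬ ((a + b : ℤ) : ZMod m) ∉ Atil)).card ≤ Atil.card := by
      apply Finset.card_le_card_of_injOn (fun b => ((a + b : ℤ) : ZMod m))
      · intro b hb
        have := (Finset.mem_filter.mp hb).2
        simpa using this
      · intro b hb b' hb' hbb
        simp only [Finset.coe_filter, Set.mem_setOf_eq] at hb hb'
        have hbE : b ∈ (E : Set ℤ) := hb.1
        have hb'E : b' ∈ (E : Set ℤ) := hb'.1
        apply hinj hbE hb'E
        have h2 : ((a : ZMod m)) + (b : ZMod m) = ((a : ZMod m)) + (b' : ZMod m) := by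
          push_cast at hbb; exact hbb
        exact add_left_cancel h2
    omega
  -- rewrite each summand
  have hterm : ∀ b : ℤ,
      ((A.image (fun x => x + b)).filter (fun x : ℤ => ((x : ZMod m) ∉ Atil))).card
        = (A.filter (fun a => ((a + b : ℤ) : ZMod m) ∉ Atil)).card := by
    intro b
    rw [Finset.filter_image]
    exact Finset.card_image_of_injective _ (add_left_injective b)
  -- natural-number inequality
  have hnat : A.card * Btil.card ≤
      (∑ b ∈ E, (A.filter (fun a => ((a + b : ℤ) : ZMod m) ∉ Atil)).card)
        + A.card * Atil.card := by
    have hswap : (∑ b ∈ E, (A.filter (fun a => ((a + b : ℤ) : ZMod m) ∉ Atil)).card)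
        = ∑ a ∈ A, (E.filter (fun b => ((a + b : ℤ) : ZMod m) ∉ Atil)).card := by
      simp only [Finset.card_filter]
      exact Finset.sum_comm
    rw [hswap]
    calc A.card * Btil.card = ∑ _a ∈ A, Btil.card := by
          rw [Finset.sum_const, smul_eq_mul]
      _ ≤ ∑ a ∈ A, ((E.filter (fun b => ((a + b : ℤ) : ZMod m) ∉ Atil)).card + Atil.card) :=
          Finset.sum_le_sum (fun a _ => key a)
      _ = _ := by rw [Finset.sum_add_distrib, Finset.sum_const, smul_eq_mul]
  have hBtpos : 0 < (Btil.card : ℝ) := by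
    have : Btil.Nonempty := hB.image _
    exact_mod_cast Finset.card_pos.mpr this
  have hsum : (∑ b ∈ E,
      (((A.image (fun x => x + b)).filter (fun x : ℤ => ((x : ZMod m) ∉ Atil))).card : ℝ))
      = ((∑ b ∈ E, (A.filter (fun a => ((a + b : ℤ) : ZMod m) ∉ Atil)).card : ℕ) : ℝ) := by
    rw [Nat.cast_sum]
    exact Finset.sum_congr rfl (fun b _ => congrArg Nat.cast (hterm b))
  rw [hsum, hcardE]
  rcases le_total (((Btil.card : ℝ) - Atil.card) / Btil.card) 0 with h | h
  · rw [max_eq_left h, mul_zero]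
    exact div_nonneg (Nat.cast_nonneg _) (Nat.cast_nonneg _)
  · rw [max_eq_right h, ← mul_div_assoc, div_le_div_iff_of_pos_right hBtpos]
    have hc : ((A.card * Btil.card : ℕ) : ℝ) ≤
        (((∑ b ∈ E, (A.filter (fun a => ((a + b : ℤ) : ZMod m) ∉ Atil)).card
          + A.card * Atil.card : ℕ)) : ℝ) := Nat.cast_le.mpr hnat
    rw [Nat.cast_add, Nat.cast_mul, Nat.cast_mul] at hc
    nlinarith [hc]
end

section
/- Let A and B be finite non-empty subsets of ℤ with min B = 0 and max B = m > 0. Then the average over b ∈ B \ {m} of |A + {0, b, m}| is at least |A| + |π_m(A)| + |A| · max(0, (|B| - 1 - |π_m(A)|)/(|B| - 1)). -/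
open Finset Pointwise

private lemma perb (A : Finset ℤ) (m : ℕ) (hm : 0 < m) (b : ℤ) :
    A.card + (A.image (fun x : ℤ => (x : ZMod m))).card
      + (A.filter (fun a : ℤ => ((a + b : ℤ) : ZMod m) ∉ A.image (fun x : ℤ => (x : ZMod m)))).card
      ≤ (A + ({0, b, (m : ℤ)} : Finset ℤ)).card := by
  set π : ℤ → ZMod m := fun x : ℤ => (x : ZMod m) with hπ
  set M : Finset ℤ := (A.image (· + (m : ℤ))) \ A with hM
  set D : Finset ℤ := (A.filter (fun a : ℤ => π (a + b) ∉ A.image π)).image (· + b) with hD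
  have hm' : (0 : ℤ) < (m : ℤ) := by exact_mod_cast hm
  have hπm : ∀ x : ℤ, π (x + (m : ℤ)) = π x := by
    intro x
    simp only [hπ]
    push_cast
    simp [ZMod.natCast_self]
  have hAsub : A ⊆ A + ({0, b, (m : ℤ)} : Finset ℤ) := by
    intro a ha
    exact Finset.mem_add.2 ⟨a, ha, 0, by simp, add_zero a⟩
  have hMsub : M ⊆ A + ({0, b, (m : ℤ)} : Finset ℤ) := by
    intro x hx
    obtain ⟨a, ha, rfl⟩ := Finset.mem_image.1 (Finset.mem_sdiff.1 hx).1
    exact Finset.mem_add.2 ⟨a, ha, (m : ℤ), by simp, rfl⟩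
  have hDsub : D ⊆ A + ({0, b, (m : ℤ)} : Finset ℤ) := by
    intro x hx
    obtain ⟨a, ha, rfl⟩ := Finset.mem_image.1 hx
    exact Finset.mem_add.2 ⟨a, (Finset.mem_filter.1 ha).1, b, by simp, rfl⟩
  have hdisj1 : Disjoint A M := disjoint_sdiff_self_right
  have hdisj2 : Disjoint (A ∪ M) D := by
    rw [Finset.disjoint_right]
    intro x hxD hxAM
    obtain ⟨a, ha, rfl⟩ := Finset.mem_image.1 hxD
    obtain ⟨haA, hnot⟩ := Finset.mem_filter.1 ha
    rcases Finset.mem_union.1 hxAM with h | h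
    · exact hnot (Finset.mem_image.2 ⟨a + b, h, rfl⟩)
    · obtain ⟨c, hc, hcx⟩ := Finset.mem_image.1 (Finset.mem_sdiff.1 h).1
      have : π (a + b) = π c := by rw [← hcx, hπm]
      exact hnot (this ▸ Finset.mem_image.2 ⟨c, hc, rfl⟩)
  have hMk : (A.image π).card ≤ M.card := by
    have hsub : A.image π ⊆ M.image π := by
      intro r hr
      obtain ⟨a, ha, rfl⟩ := Finset.mem_image.1 hr
      set S := A.filter (fun x : ℤ => π x = π a) with hS
      have hSne : S.Nonempty := ⟨a, Finset.mem_filter.2 ⟨ha, rfl⟩⟩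
      set x := S.max' hSne with hx
      have hxS : x ∈ S := S.max'_mem hSne
      have hxA : x ∈ A := (Finset.mem_filter.1 hxS).1
      have hxr : π x = π a := (Finset.mem_filter.1 hxS).2
      have hnotA : x + (m : ℤ) ∉ A := by
        intro h
        have hmem : x + (m : ℤ) ∈ S := Finset.mem_filter.2 ⟨h, by rw [hπm, hxr]⟩
        have := S.le_max' _ hmem
        omega
      refine Finset.mem_image.2 ⟨x + (m : ℤ), Finset.mem_sdiff.2
        ⟨Finset.mem_image.2 ⟨x, hxA, rfl⟩, hnotA⟩, by rw [hπm, hxr]⟩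
    calc (A.image π).card ≤ (M.image π).card := Finset.card_le_card hsub
      _ ≤ M.card := Finset.card_image_le
  have hDcard : D.card = (A.filter (fun a : ℤ => π (a + b) ∉ A.image π)).card :=
    Finset.card_image_of_injective _ (add_left_injective b)
  calc A.card + (A.image π).card
        + (A.filter (fun a : ℤ => π (a + b) ∉ A.image π)).card
      ≤ A.card + M.card + D.card := by omega
    _ = ((A ∪ M) ∪ D).card := by
        rw [Finset.card_union_of_disjoint hdisj2, Finset.card_union_of_disjoint hdisj1]
    _ ≤ (A + ({0, b, (m : ℤ)} : Finset ℤ)).card :=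
        Finset.card_le_card (Finset.union_subset (Finset.union_subset hAsub hMsub) hDsub)

theorem stmt_3 (A B : Finset ℤ) (hA : A.Nonempty) (hB : B.Nonempty) (m : ℕ) (hm : 0 < m)
    (hmin : B.min' hB = 0) (hmax : B.max' hB = (m : ℤ)) :
    (A.card : ℝ) + (A.image (fun x : ℤ => (x : ZMod m))).card
      + (A.card : ℝ) * max 0 (((B.card : ℝ) - 1
          - (A.image (fun x : ℤ => (x : ZMod m))).card) / ((B.card : ℝ) - 1))
      ≤ (∑ b ∈ B.erase (m : ℤ),
          ((A + ({0, b, (m : ℤ)} : Finset ℤ)).card : ℝ)) / (B.erase (m : ℤ)).card := by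
  set π : ℤ → ZMod m := fun x : ℤ => (x : ZMod m) with hπ
  set k := (A.image π).card with hk
  set B' := B.erase (m : ℤ) with hB'
  have hm' : (0 : ℤ) < (m : ℤ) := by exact_mod_cast hm
  have hmB : (m : ℤ) ∈ B := hmax ▸ B.max'_mem hB
  have h0B : (0 : ℤ) ∈ B := hmin ▸ B.min'_mem hB
  have h0B' : (0 : ℤ) ∈ B' := Finset.mem_erase.2 ⟨by omega, h0B⟩
  set n := B'.card with hn
  have hnpos : 0 < n := Finset.card_pos.2 ⟨0, h0B'⟩
  have hrange : ∀ b ∈ B', 0 ≤ b ∧ b < (m : ℤ) := by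
    intro b hb
    obtain ⟨hne, hbB⟩ := Finset.mem_erase.1 hb
    have h1 := B.min'_le b hbB
    have h2 := B.le_max' b hbB
    rw [hmin] at h1
    rw [hmax] at h2
    exact ⟨h1, lt_of_le_of_ne h2 hne⟩
  have hinj : Set.InjOn π B' := by
    intro b₁ h₁ b₂ h₂ h
    obtain ⟨hb₁0, hb₁m⟩ := hrange b₁ h₁
    obtain ⟨hb₂0, hb₂m⟩ := hrange b₂ h₂
    have hmod : b₁ % (m : ℤ) = b₂ % (m : ℤ) := (ZMod.intCast_eq_intCast_iff _ _ _).1 h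
    rwa [Int.emod_eq_of_lt hb₁0 hb₁m, Int.emod_eq_of_lt hb₂0 hb₂m] at hmod
  -- the sum of gains
  have hsum : A.card * (n - k) ≤
      ∑ b ∈ B', (A.filter (fun a : ℤ => π (a + b) ∉ A.image π)).card := by
    have hswap : ∑ b ∈ B', (A.filter (fun a : ℤ => π (a + b) ∉ A.image π)).card
        = ∑ a ∈ A, (B'.filter (fun b : ℤ => π (a + b) ∉ A.image π)).card := by
      simp only [Finset.card_filter]
      exact Finset.sum_comm
    rw [hswap]
    have hper : ∀ a ∈ A, n - k ≤ (B'.filter (fun b : ℤ => π (a + b) ∉ A.image π)).card := by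
      intro a _
      have h1 : (B'.filter (fun b : ℤ => π (a + b) ∈ A.image π)).card ≤ k := by
        apply Finset.card_le_card_of_injOn (fun b => π (a + b))
        · intro b hb
          exact (Finset.mem_filter.1 hb).2
        · intro b₁ h₁ b₂ h₂ hEq
          apply hinj (Finset.mem_coe.1 (Finset.mem_of_mem_filter _ h₁))
            (Finset.mem_coe.1 (Finset.mem_of_mem_filter _ h₂))
          have : (a : ZMod m) + π b₁ = (a : ZMod m) + π b₂ := by
            have e1 : π (a + b₁) = (a : ZMod m) + π b₁ := by push_cast [hπ]; ring
            have e2 : π (a + b₂) = (a : ZMod m) + π b₂ := by push_cast [hπ]; ring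
            rw [← e1, ← e2]; exact hEq
          exact add_left_cancel this
      have h2 := Finset.card_filter_add_card_filter_not
        (s := B') (p := fun b : ℤ => π (a + b) ∈ A.image π)
      omega
    calc A.card * (n - k) = ∑ _a ∈ A, (n - k) := by rw [Finset.sum_const, smul_eq_mul, mul_comm]
      _ ≤ _ := Finset.sum_le_sum hper
  have hmain : n * (A.card + k) + A.card * (n - k) ≤
      ∑ b ∈ B', (A + ({0, b, (m : ℤ)} : Finset ℤ)).card := by
    have h1 : ∀ b ∈ B', A.card + k
        + (A.filter (fun a : ℤ => π (a + b) ∉ A.image π)).card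
        ≤ (A + ({0, b, (m : ℤ)} : Finset ℤ)).card := fun b _ => perb A m hm b
    calc n * (A.card + k) + A.card * (n - k)
        ≤ ∑ b ∈ B', (A.card + k
            + (A.filter (fun a : ℤ => π (a + b) ∉ A.image π)).card) := by
          rw [Finset.sum_add_distrib, Finset.sum_const, smul_eq_mul, ← hn]
          omega
      _ ≤ _ := Finset.sum_le_sum h1
  -- real arithmetic
  have hcard : (B.card : ℝ) - 1 = (n : ℝ) := by
    have : B'.card = B.card - 1 := Finset.card_erase_of_mem hmB
    have hBpos : 0 < B.card := Finset.card_pos.2 hB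
    rw [hn] at *
    push_cast [this, Nat.cast_sub hBpos]
    ring
  rw [hcard]
  have hnR : (0 : ℝ) < (n : ℝ) := by exact_mod_cast hnpos
  rw [le_div_iff₀ hnR]
  have hmainR : (n : ℝ) * ((A.card : ℝ) + (k : ℝ)) + ((A.card * (n - k) : ℕ) : ℝ)
      ≤ ∑ b ∈ B', ((A + ({0, b, (m : ℤ)} : Finset ℤ)).card : ℝ) := by
    push_cast [← Nat.cast_sum]
    exact_mod_cast hmain
  by_cases hkn : n ≤ k
  · have hnk : (n : ℝ) ≤ (k : ℝ) := by exact_mod_cast hkn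
    have hz : ((n : ℝ) - (k : ℝ)) / (n : ℝ) ≤ 0 :=
      div_nonpos_iff.2 (Or.inr ⟨by linarith, hnR.le⟩)
    rw [max_eq_left hz]
    have hpos : (0 : ℝ) ≤ ((A.card * (n - k) : ℕ) : ℝ) := Nat.cast_nonneg _
    nlinarith
  · push_neg at hkn
    have hge : (0 : ℝ) ≤ ((n : ℝ) - (k : ℝ)) / (n : ℝ) := by
      apply div_nonneg _ hnR.le
      have : (k : ℝ) ≤ (n : ℝ) := by exact_mod_cast hkn.le
      linarith
    rw [max_eq_right hge]
    have hcast : ((A.card * (n - k) : ℕ) : ℝ) = (A.card : ℝ) * ((n : ℝ) - (k : ℝ)) := by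
      push_cast [Nat.cast_sub hkn.le]
      ring
    rw [hcast] at hmainR
    have hdm : ((n : ℝ) - (k : ℝ)) / (n : ℝ) * (n : ℝ) = (n : ℝ) - (k : ℝ) :=
      div_mul_cancel₀ _ hnR.ne'
    nlinarith
end

section
/- Let A and B be finite non-empty subsets of ℤ with min B = 0, max B = m > 0 and |A| ≥ |B| - 1. Then the average over b ∈ B \ {m} of |A + {0, b, m}| is at least |A| + |B| - 1. -/
open Finset Pointwise

/-!
Put `D = A ∪ (A + m)`. Then `|A + {0, b, m}| = |D| + |A| - c_b` with
`c_b = #{a ∈ A : a + b ∈ D}`, and `|D| = |A| + s` with `s = |(A + m) \ A|`. In every residue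
class mod `m` met by `A`, the largest element of `A` is pushed out of `A` by `+ m`, so `s` is at
least the number of such classes. For fixed `a`, the `b ∈ [0, m)` with `a + b ∈ D` have distinct
residues, all met by `A`; double counting gives `∑ c_b ≤ |A| s`, and trivially `∑ c_b ≤ n |A|`
for `n = |B \ {m}|`. Hence `∑ |A + {0, b, m}| ≥ n (2|A| + s) - |A| min(n, s) ≥ n (|A| + n)`,
the last step being `(|A| - n)(n - s) ≥ 0` when `s < n`.
-/

lemma card_image_emod_le_card_image_add_sdiff (A : Finset ℤ) {m : ℤ} (hm : 0 < m) :
    #(A.image (· % m)) ≤ #(A.image (· + m) \ A) := by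
  refine card_le_card_of_surjOn (· % m) ?_
  intro r hr
  obtain ⟨a, ha, rfl⟩ := mem_image.1 hr
  set C := A.filter (· % m = a % m)
  have hC : C.Nonempty := ⟨a, mem_filter.2 ⟨ha, rfl⟩⟩
  obtain ⟨htopA, htop⟩ := mem_filter.1 (C.max'_mem hC)
  refine ⟨C.max' hC + m, mem_sdiff.2 ⟨mem_image_of_mem _ htopA, fun hA => ?_⟩, ?_⟩
  · have : C.max' hC + m ∈ C := mem_filter.2 ⟨hA, by simpa [Int.add_emod_right] using htop⟩
    linarith [C.le_max' _ this]
  · simpa [Int.add_emod_right] using htop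

lemma card_filter_add_mem_le_card_image_emod (A B : Finset ℤ) {m : ℤ}
    (hB : ∀ b ∈ B, 0 ≤ b ∧ b < m) (a : ℤ) :
    #(B.filter (a + · ∈ A ∪ A.image (· + m))) ≤ #(A.image (· % m)) := by
  refine card_le_card_of_injOn (fun b => (a + b) % m) ?_ ?_
  · intro b hb
    simp only [coe_filter, Set.mem_ofPred_eq, mem_union, mem_image] at hb
    rcases hb.2 with h | ⟨a', ha', h⟩
    · exact mem_image_of_mem _ h
    · exact mem_image.2 ⟨a', ha', by simp only [← h, Int.add_emod_right]⟩
  · intro b₁ h₁ b₂ h₂ h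
    have hmod : b₁ ≡ b₂ [ZMOD m] := Int.ModEq.add_left_cancel' a h
    obtain ⟨h₁0, h₁m⟩ := hB b₁ (mem_filter.1 h₁).1
    obtain ⟨h₂0, h₂m⟩ := hB b₂ (mem_filter.1 h₂).1
    rwa [Int.ModEq, Int.emod_eq_of_lt h₁0 h₁m, Int.emod_eq_of_lt h₂0 h₂m] at hmod

section

variable {G : Type*} [DecidableEq G]

lemma add_insert_zero_insert_singleton [AddMonoid G] (A : Finset G) (b m : G) :
    A + {0, b, m} = A ∪ A.image (· + m) ∪ A.image (· + b) := by
  ext x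
  simp only [mem_add, mem_insert, mem_singleton, mem_union, mem_image]
  aesop

lemma card_union_image_add_add_card_filter [AddRightCancelSemigroup G] (A D : Finset G) (b : G) :
    #(D ∪ A.image (· + b)) + #(A.filter (· + b ∈ D)) = #D + #A := by
  have hinter : D ∩ A.image (· + b) = (A.filter (· + b ∈ D)).image (· + b) := by
    ext x
    simp only [mem_inter, mem_image, mem_filter]
    aesop
  rw [← card_image_of_injective A (add_left_injective b),
    ← card_union_add_card_inter D (A.image (· + b)), hinter,
    card_image_of_injective _ (add_left_injective b)]

lemma sum_card_filter_add_mem_le [Add G] (A B D : Finset G) {k : ℕ}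
    (h : ∀ a ∈ A, #(B.filter (a + · ∈ D)) ≤ k) :
    ∑ b ∈ B, #(A.filter (· + b ∈ D)) ≤ #A * k := by
  have hswap := sum_card_bipartiteAbove_eq_sum_card_bipartiteBelow (s := A) (t := B)
    (r := fun a b => a + b ∈ D)
  simp only [bipartiteAbove, bipartiteBelow] at hswap
  rw [← hswap]
  simpa using sum_le_card_nsmul A _ k h

end

lemma card_mul_le_sum_card_add_zero_insert (A B : Finset ℤ) {m : ℤ} (hm : 0 < m)
    (hB : ∀ b ∈ B, 0 ≤ b ∧ b < m) (hcard : #B ≤ #A) :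
    #B * (#A + #B) ≤ ∑ b ∈ B, #(A + {0, b, m}) := by
  have hD : #(A ∪ A.image (· + m)) = #A + #(A.image (· + m) \ A) := by
    rw [union_comm, ← card_sdiff_add_card, add_comm]
  set D := A ∪ A.image (· + m)
  set s := #(A.image (· + m) \ A)
  have hterm (b : ℤ) : #(A + {0, b, m}) + #(A.filter (· + b ∈ D)) = 2 * #A + s := by
    rw [add_insert_zero_insert_singleton, card_union_image_add_add_card_filter, hD]
    ring
  have hsum : ∑ b ∈ B, #(A + {0, b, m}) + ∑ b ∈ B, #(A.filter (· + b ∈ D))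
      = #B * (2 * #A + s) := by
    rw [← sum_add_distrib, sum_congr rfl fun b _ => hterm b, sum_const, smul_eq_mul]
  have hcommon : ∑ b ∈ B, #(A.filter (· + b ∈ D)) ≤ #A * s :=
    sum_card_filter_add_mem_le A B D fun a _ =>
      (card_filter_add_mem_le_card_image_emod A B hB a).trans
        (card_image_emod_le_card_image_add_sdiff A hm)
  have hfilter : ∑ b ∈ B, #(A.filter (· + b ∈ D)) ≤ #B * #A := by
    simpa using sum_le_card_nsmul B _ #A fun b _ => card_filter_le A _
  rcases le_total #B s with h | h <;> nlinarith

theorem stmt_4_general (A B : Finset ℤ) (hB : B.Nonempty) (m : ℕ) (hm : 0 < m)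
    (hmin : B.min' hB = 0) (hmax : B.max' hB = (m : ℤ))
    (hcard : B.card - 1 ≤ A.card) :
    (A.card : ℝ) + B.card - 1
      ≤ (∑ b ∈ B.erase (m : ℤ),
          ((A + ({0, b, (m : ℤ)} : Finset ℤ)).card : ℝ)) / (B.erase (m : ℤ)).card := by
  have hmB : (m : ℤ) ∈ B := hmax ▸ B.max'_mem hB
  have h0B : (0 : ℤ) ∈ B.erase (m : ℤ) := mem_erase.2 ⟨by omega, hmin ▸ B.min'_mem hB⟩
  have hrange : ∀ b ∈ B.erase (m : ℤ), 0 ≤ b ∧ b < (m : ℤ) := fun b hb =>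
    ⟨hmin ▸ B.min'_le b (mem_of_mem_erase hb),
      lt_of_le_of_ne (hmax ▸ B.le_max' b (mem_of_mem_erase hb)) (ne_of_mem_erase hb)⟩
  have hBcard : #B = #(B.erase (m : ℤ)) + 1 := (card_erase_add_one hmB).symm
  have key := card_mul_le_sum_card_add_zero_insert A (B.erase (m : ℤ)) (by omega) hrange
    (by omega)
  have hpos : (0 : ℝ) < #(B.erase (m : ℤ)) := by exact_mod_cast card_pos.2 ⟨0, h0B⟩
  have keyR : ((#(B.erase (m : ℤ)) * (#A + #(B.erase (m : ℤ))) : ℕ) : ℝ)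
      ≤ ((∑ b ∈ B.erase (m : ℤ), #(A + {0, b, (m : ℤ)}) : ℕ) : ℝ) := by exact_mod_cast key
  rw [le_div_iff₀ hpos, hBcard]
  push_cast at keyR ⊢
  linarith

theorem stmt_4 (A B : Finset ℤ) (hA : A.Nonempty) (hB : B.Nonempty) (m : ℕ) (hm : 0 < m)
    (hmin : B.min' hB = 0) (hmax : B.max' hB = (m : ℤ))
    (hcard : B.card - 1 ≤ A.card) :
    (A.card : ℝ) + B.card - 1
      ≤ (∑ b ∈ B.erase (m : ℤ),
          ((A + ({0, b, (m : ℤ)} : Finset ℤ)).card : ℝ)) / (B.erase (m : ℤ)).card :=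
  stmt_4_general A B hB m hm hmin hmax hcard
end

section
/- Let A and B be finite non-empty subsets of ℤ with |A| = |B| ≥ 4, min B = 0 and max B = m. Suppose that for all b₁, b₂, b₃ ∈ B we have |A + {b₁, b₂, b₃}| ≤ |A| + |B| - 1. Then A and B are arithmetic progressions with the same common difference. -/
/-!
Testing the hypothesis on the triples `{b, 0, m}` gives `|(b + A) ∪ U| ≤ 2|A| - 1` for
`U = A ∪ (m + A)`. With `k = |U| - |A|`, every `b ∈ B` strictly between `0` and `m` then forces
`|(b + A) ∩ U| ≥ k + 1`; counting by residues modulo `m`, these intersections have total size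
at most `|A| (r - 1)`, where `r ≤ k` is the number of residues of `A`. Hence `|U| = 2|A| - 1`,
and every translate `b + A` lies in `U`, i.e. `A + B ⊆ A ∪ (m + A)`. Reading this at the two
ends of `A` gives `A = min A + B`, so `B + B ⊆ B ∪ (m + B)`: `B` is closed under addition
modulo `m`, and is therefore the set of multiples of its least positive element in `[0, m]`.
-/
open Finset Pointwise

/-- A finite set of integers is an arithmetic progression with common difference `d`. -/
def IsAPZ (S : Finset ℤ) (d : ℤ) : Prop :=
  ∃ x : ℤ, S = (Finset.range S.card).image (fun i : ℕ => x + d * (i : ℤ))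

lemma isAPZ_image_mul_range {d : ℤ} (hd : d ≠ 0) (n : ℕ) :
    IsAPZ ((range n).image (fun i : ℕ => d * i)) d := by
  refine ⟨0, ?_⟩
  rw [card_image_of_injective _ fun i j h => by simpa [hd] using h, card_range]
  simp

lemma IsAPZ.vadd {S : Finset ℤ} {d : ℤ} (h : IsAPZ S d) (a : ℤ) : IsAPZ (a +ᵥ S) d := by
  obtain ⟨x, hx⟩ := h
  refine ⟨a + x, ?_⟩
  rw [card_vadd_finset, vadd_finset_def]
  conv_lhs => rw [hx]
  rw [image_image]
  simp only [Function.comp_def, vadd_eq_add, add_assoc]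

namespace Finset

lemma mem_vadd_finset_iff_sub_mem {s : Finset ℤ} {a x : ℤ} : x ∈ a +ᵥ s ↔ x - a ∈ s := by
  rw [← neg_vadd_mem_iff, vadd_eq_add, neg_add_eq_sub]

lemma card_vadd_finset_inter (A U : Finset ℤ) (b : ℤ) :
    #((b +ᵥ A) ∩ U) = #{a ∈ A | a + b ∈ U} := by
  rw [← card_vadd_finset b {a ∈ A | a + b ∈ U}]
  congr 1
  ext x
  simp [mem_vadd_finset_iff_sub_mem]

/- The largest element of `A` in a residue class modulo `m` leaves `A` when shifted by `m`. -/
lemma card_image_emod_le_card_vadd_sdiff {A : Finset ℤ} {m : ℤ} (hm : 0 < m) :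
    #(A.image (· % m)) ≤ #((m +ᵥ A) \ A) := by
  refine card_le_card_of_surjOn (· % m) fun ρ hρ => ?_
  obtain ⟨a, ha, rfl⟩ := mem_image.1 hρ
  set C := {x ∈ A | x % m = a % m}
  have hC : C.Nonempty := ⟨a, mem_filter.2 ⟨ha, rfl⟩⟩
  obtain ⟨hxA, hx⟩ := mem_filter.1 (C.max'_mem hC)
  refine ⟨C.max' hC + m, ?_, by simpa using hx⟩
  rw [mem_coe, mem_sdiff, mem_vadd_finset_iff_sub_mem, add_sub_cancel_right]
  refine ⟨hxA, fun h => ?_⟩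
  have := C.le_max' _ (mem_filter.2 ⟨h, by simpa using hx⟩)
  omega

lemma sum_card_vadd_inter_le {A S U : Finset ℤ} {m : ℤ} (hS : S ⊆ Ioo 0 m)
    (hU : ∀ c ∈ U, c % m ∈ A.image (· % m)) :
    ∑ b ∈ S, #((b +ᵥ A) ∩ U) ≤ #A * (#(A.image (· % m)) - 1) := by
  have hswap := sum_card_bipartiteAbove_eq_sum_card_bipartiteBelow (fun a b => a + b ∈ U)
    (s := A) (t := S)
  simp only [bipartiteAbove, bipartiteBelow] at hswap
  simp_rw [card_vadd_finset_inter]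
  rw [← hswap, ← smul_eq_mul]
  refine sum_le_card_nsmul _ _ _ fun a ha => ?_
  -- as `0 < b < m`, the residues `(a + b) % m` are distinct and differ from `a % m`
  rw [← card_erase_of_mem (mem_image_of_mem _ ha)]
  refine card_le_card_of_injOn (fun b => (a + b) % m) (fun b hb => ?_) (fun b₁ hb₁ b₂ hb₂ h => ?_)
  · obtain ⟨hbS, hbU⟩ := mem_filter.1 hb
    obtain ⟨hb0, hbm⟩ := mem_Ioo.1 (hS hbS)
    refine mem_erase.2 ⟨fun h => ?_, hU _ hbU⟩
    have hmod : a + b ≡ a + 0 [ZMOD m] := by rw [add_zero]; exact h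
    have := (Int.ModEq.add_left_cancel' a hmod).eq
    rw [Int.emod_eq_of_lt hb0.le hbm, Int.zero_emod] at this
    omega
  · obtain ⟨hb₁0, hb₁m⟩ := mem_Ioo.1 (hS (mem_filter.1 hb₁).1)
    obtain ⟨hb₂0, hb₂m⟩ := mem_Ioo.1 (hS (mem_filter.1 hb₂).1)
    have := (Int.ModEq.add_left_cancel' a h).eq
    rwa [Int.emod_eq_of_lt hb₁0.le hb₁m, Int.emod_eq_of_lt hb₂0.le hb₂m] at this

lemma emod_mem_image_emod_of_mem_union_vadd {A : Finset ℤ} {m c : ℤ} (hc : c ∈ A ∪ (m +ᵥ A)) :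
    c % m ∈ A.image (· % m) := by
  rcases mem_union.1 hc with hc | hc
  · exact mem_image_of_mem _ hc
  · rw [mem_vadd_finset_iff_sub_mem] at hc
    simpa using mem_image_of_mem (· % m) hc

lemma card_union_vadd_eq_two_mul_sub_one {A B : Finset ℤ} {m : ℤ} (hB : B ⊆ Icc 0 m)
    (h0 : 0 ∈ B) (hmB : m ∈ B) (hm : 0 < m) (hcard : #A = #B)
    (hunion : ∀ b ∈ B, #((b +ᵥ A) ∪ (A ∪ (m +ᵥ A))) ≤ 2 * #A - 1) :
    #(A ∪ (m +ᵥ A)) = 2 * #A - 1 := by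
  set U := A ∪ (m +ᵥ A)
  set n := #A
  set k := #((m +ᵥ A) \ A)
  set r := #(A.image (· % m))
  set S := (B.erase 0).erase m
  have hn : 2 ≤ n := hcard ▸ one_lt_card.2 ⟨0, h0, m, hmB, hm.ne⟩
  have hUk : #U = n + k := by
    rw [show U = (m +ᵥ A) ∪ A from union_comm _ _, ← card_sdiff_add_card, add_comm]
  have hUle : #U ≤ 2 * n - 1 := by simpa [U] using hunion 0 h0
  have hSn : #S = n - 2 := by
    rw [card_erase_of_mem (mem_erase.2 ⟨hm.ne', hmB⟩), card_erase_of_mem h0]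
    omega
  have hS : S ⊆ Ioo 0 m := fun b hb => by
    obtain ⟨hbm, hb0, hbB⟩ := mem_erase.1 hb |>.imp_right mem_erase.1
    have := mem_Icc.1 (hB hbB)
    exact mem_Ioo.2 ⟨by omega, by omega⟩
  have hinter : ∀ b ∈ S, k + 1 ≤ #((b +ᵥ A) ∩ U) := fun b hb => by
    have := card_union_add_card_inter (b +ᵥ A) U
    have := hunion b (mem_of_mem_erase (mem_of_mem_erase hb))
    rw [card_vadd_finset] at *
    omega
  have hr : 1 ≤ r := card_pos.2 (card_pos.1 (by omega) |>.image _)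
  have hrk : r ≤ k := card_image_emod_le_card_vadd_sdiff hm
  have hcount : (n - 2) * (k + 1) ≤ n * (r - 1) := by
    rw [← hSn, ← smul_eq_mul]
    exact (card_nsmul_le_sum S _ _ hinter).trans (sum_card_vadd_inter_le hS
      fun _ => emod_mem_image_emod_of_mem_union_vadd)
  have hkn : n ≤ k + 1 := by
    have : (n - 2) * (k + 1) ≤ n * (k - 1) := hcount.trans (Nat.mul_le_mul_left _ (by omega))
    zify [hn, hr.trans hrk] at this
    nlinarith
  omega

lemma add_subset_of_card_vadd_union_le {A B U : Finset ℤ}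
    (h : ∀ b ∈ B, #((b +ᵥ A) ∪ U) ≤ #U) : A + B ⊆ U := by
  refine add_subset_iff.2 fun a ha b hb => ?_
  have hbU : b +ᵥ A ⊆ U :=
    union_eq_right.1 (eq_of_subset_of_card_le subset_union_right (h b hb)).symm
  exact hbU (by rw [mem_vadd_finset_iff_sub_mem, add_sub_cancel_right]; exact ha)

section Rigidity

variable {A B : Finset ℤ} {m : ℤ}

lemma vadd_erase_eq_erase_max' (hA : A.Nonempty) (hB : B ⊆ Icc 0 m) (hmB : m ∈ B)
    (hcard : #A = #B) (hsub : A + B ⊆ A ∪ (m +ᵥ A)) (hω : A.min' hA + m ≤ A.max' hA) :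
    A.min' hA +ᵥ B.erase m = A.erase (A.max' hA) := by
  refine eq_of_subset_of_card_le (fun x hx => ?_) ?_
  · rw [mem_vadd_finset_iff_sub_mem] at hx
    obtain ⟨hxm, hxB⟩ := mem_erase.1 hx
    have := mem_Icc.1 (hB hxB)
    rcases mem_union.1 (add_subset_iff.1 hsub _ (min'_mem A hA) _ hxB) with h | h
    · rw [add_sub_cancel] at h
      exact mem_erase.2 ⟨by omega, h⟩
    · rw [mem_vadd_finset_iff_sub_mem] at h
      have := min'_le A _ h
      omega
  · rw [card_erase_of_mem (max'_mem A hA), card_vadd_finset, card_erase_of_mem hmB, hcard]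

lemma vadd_erase_eq_erase_min' (hA : A.Nonempty) (hB : B ⊆ Icc 0 m) (h0 : 0 ∈ B)
    (hcard : #A = #B) (hsub : A + B ⊆ A ∪ (m +ᵥ A)) (hω : A.min' hA + m ≤ A.max' hA) :
    (A.max' hA - m) +ᵥ B.erase 0 = A.erase (A.min' hA) := by
  refine eq_of_subset_of_card_le (fun x hx => ?_) ?_
  · rw [mem_vadd_finset_iff_sub_mem] at hx
    obtain ⟨hx0, hxB⟩ := mem_erase.1 hx
    have := mem_Icc.1 (hB hxB)
    rcases mem_union.1 (add_subset_iff.1 hsub _ (max'_mem A hA) _ hxB) with h | h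
    · have := le_max' A _ h
      omega
    · rw [mem_vadd_finset_iff_sub_mem, show A.max' hA + (x - (A.max' hA - m)) - m = x by ring] at h
      exact mem_erase.2 ⟨by omega, h⟩
  · rw [card_erase_of_mem (min'_mem A hA), card_vadd_finset, card_erase_of_mem h0, hcard]

lemma eq_min'_vadd (hA : A.Nonempty) (hB : B ⊆ Icc 0 m) (h0 : 0 ∈ B) (hmB : m ∈ B)
    (hcard : #A = #B) (h3 : 3 ≤ #B) (hsub : A + B ⊆ A ∪ (m +ᵥ A))
    (hinter : (A ∩ (m +ᵥ A)).Nonempty) :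
    A = A.min' hA +ᵥ B := by
  set α := A.min' hA
  set ω := A.max' hA
  have hω : α + m ≤ ω := by
    obtain ⟨x, hx⟩ := hinter
    rw [mem_inter, mem_vadd_finset_iff_sub_mem] at hx
    have := min'_le A _ hx.2
    have := le_max' A _ hx.1
    omega
  have hlow := vadd_erase_eq_erase_max' hA hB hmB hcard hsub hω
  have hhigh := vadd_erase_eq_erase_min' hA hB h0 hcard hsub hω
  -- the least positive element `δ` of `B` is below `m`, and `α + δ ∈ A \ {α}` is `ω - m + b` with
  -- `δ ≤ b`, whence `ω ≤ α + m`
  have hB' : 1 < #(B.erase 0) := by rw [card_erase_of_mem h0]; omega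
  set δ := (B.erase 0).min' (card_pos.1 (by omega))
  obtain ⟨hδ0, hδB⟩ := mem_erase.1 (min'_mem (B.erase 0) _)
  have hδm : δ < m := (min'_lt_max'_of_card _ hB').trans_le
    (mem_Icc.1 (hB (mem_of_mem_erase (max'_mem _ _)))).2
  have hαδ : α + δ ∈ A.erase ω := by
    rw [← hlow]
    exact vadd_mem_vadd_finset_iff α |>.2 (mem_erase.2 ⟨hδm.ne, hδB⟩)
  have hαδ' : α + δ ∈ A.erase α := by
    have := (mem_Icc.1 (hB hδB)).1
    exact mem_erase.2 ⟨by omega, mem_of_mem_erase hαδ⟩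
  rw [← hhigh, mem_vadd_finset_iff_sub_mem] at hαδ'
  have := min'_le _ _ hαδ'
  have hωα : ω = α + m := by omega
  calc A = insert ω (A.erase ω) := (insert_erase (max'_mem A hA)).symm
    _ = α +ᵥ insert m (B.erase m) := by rw [vadd_finset_insert, hlow, vadd_eq_add, ← hωα]
    _ = α +ᵥ B := by rw [insert_erase hmB]

lemma add_subset_union_vadd_of_eq_vadd {a : ℤ} (hAB : A = a +ᵥ B)
    (hsub : A + B ⊆ A ∪ (m +ᵥ A)) : B + B ⊆ B ∪ (m +ᵥ B) := by
  rwa [hAB, vadd_add_assoc, vadd_comm m a, ← vadd_finset_union,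
    vadd_finset_subset_vadd_finset_iff] at hsub

end Rigidity

section ClosedModulo

variable {B : Finset ℤ} {m δ : ℤ}

lemma mul_natCast_mem_of_add_subset (hB : B ⊆ Icc 0 m) (h0 : 0 ∈ B) (hmB : m ∈ B)
    (hclosed : B + B ⊆ B ∪ (m +ᵥ B)) (hδB : δ ∈ B) : ∀ j : ℕ, δ * j ≤ m → δ * j ∈ B
  | 0, _ => by simpa using h0
  | j + 1, hj => by
    have hδ := (mem_Icc.1 (hB hδB)).1
    push_cast at hj ⊢
    have hj' : δ * j ≤ m := by nlinarith
    rw [mul_add_one]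
    rcases mem_union.1 (add_subset_iff.1 hclosed _ (mul_natCast_mem_of_add_subset hB h0 hmB
      hclosed hδB j hj') δ hδB) with h | h
    · exact h
    · rw [mem_vadd_finset_iff_sub_mem] at h
      have := (mem_Icc.1 (hB h)).1
      rwa [show δ * j + δ = m by linarith]

lemma dvd_sub_of_add_subset (hB : B ⊆ Icc 0 m) (hclosed : B + B ⊆ B ∪ (m +ᵥ B))
    (hδB : δ ∈ B) (hδ : 0 < δ) (hδmin : ∀ x ∈ B, 0 < x → δ ≤ x) {b : ℤ} (hb : b ∈ B) :
    δ ∣ m - b := by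
  obtain ⟨k, hk⟩ : ∃ k : ℕ, m - b = k := ⟨(m - b).toNat, by have := (mem_Icc.1 (hB hb)).2; omega⟩
  induction k using Nat.strong_induction_on generalizing b with
  | _ k ih =>
    rcases mem_union.1 (add_subset_iff.1 hclosed _ hb _ hδB) with h | h
    · have := (mem_Icc.1 (hB h)).2
      have hdvd := ih (m - (b + δ)).toNat (by omega) h (by omega)
      rw [show m - b = m - (b + δ) + δ by ring]
      exact dvd_add hdvd dvd_rfl
    · rw [mem_vadd_finset_iff_sub_mem] at h
      have := (mem_Icc.1 (hB h)).1
      have := (mem_Icc.1 (hB hb)).2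
      by_cases hbm : b = m
      · simp [hbm]
      · have : ¬ 0 < b + δ - m := fun hpos => by have := hδmin _ h hpos; omega
        rw [show m - b = δ by omega]

lemma exists_isAPZ_of_add_subset (hB : B ⊆ Icc 0 m) (h0 : 0 ∈ B) (hmB : m ∈ B) (hm : 0 < m)
    (hclosed : B + B ⊆ B ∪ (m +ᵥ B)) : ∃ d, 0 < d ∧ IsAPZ B d := by
  have hne : (B.erase 0).Nonempty := ⟨m, mem_erase.2 ⟨hm.ne', hmB⟩⟩
  set δ := (B.erase 0).min' hne
  obtain ⟨hδ0, hδB⟩ := mem_erase.1 (min'_mem _ hne)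
  have hδ : 0 < δ := lt_of_le_of_ne (mem_Icc.1 (hB hδB)).1 (Ne.symm hδ0)
  have hδmin : ∀ x ∈ B, 0 < x → δ ≤ x := fun x hx hx0 => min'_le _ _ (mem_erase.2 ⟨hx0.ne', hx⟩)
  have hdvd {b} (hb : b ∈ B) : δ ∣ m - b := dvd_sub_of_add_subset hB hclosed hδB hδ hδmin hb
  obtain ⟨q, hq⟩ : δ ∣ m := by simpa using hdvd h0
  have hq0 : 0 ≤ q := nonneg_of_mul_nonneg_right (hq ▸ hm.le) hδ
  refine ⟨δ, hδ, ?_⟩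
  suffices hBq : B = (range (q.toNat + 1)).image (fun j : ℕ => δ * j) by
    rw [hBq]; exact isAPZ_image_mul_range hδ.ne' _
  ext x
  constructor
  · intro hx
    obtain ⟨t, rfl⟩ : δ ∣ x := by simpa using dvd_sub (hdvd h0) (hdvd hx)
    obtain ⟨ht0, htq⟩ := mem_Icc.1 (hB hx)
    have ht0 : 0 ≤ t := nonneg_of_mul_nonneg_right ht0 hδ
    have htq : t ≤ q := le_of_mul_le_mul_left (hq ▸ htq) hδ
    exact mem_image.2 ⟨t.toNat, mem_range.2 (by omega), by rw [Int.toNat_of_nonneg ht0]⟩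
  · intro hx
    obtain ⟨j, hj, rfl⟩ := mem_image.1 hx
    refine mul_natCast_mem_of_add_subset hB h0 hmB hclosed hδB j ?_
    rw [hq]
    exact mul_le_mul_of_nonneg_left (by rw [mem_range] at hj; omega) hδ.le

end ClosedModulo

end Finset

theorem stmt_5 (A B : Finset ℤ) (hA : A.Nonempty) (hB : B.Nonempty)
    (hcard : A.card = B.card) (h4 : 4 ≤ A.card) (m : ℤ)
    (hmin : B.min' hB = 0) (hmax : B.max' hB = m)
    (hyp : ∀ b₁ ∈ B, ∀ b₂ ∈ B, ∀ b₃ ∈ B,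
      (A + ({b₁, b₂, b₃} : Finset ℤ)).card ≤ A.card + B.card - 1) :
    ∃ d : ℤ, 0 < d ∧ IsAPZ A d ∧ IsAPZ B d := by
  have h0 : 0 ∈ B := hmin ▸ B.min'_mem hB
  have hmB : m ∈ B := hmax ▸ B.max'_mem hB
  have hBI : B ⊆ Icc 0 m := fun b hb => mem_Icc.2 ⟨hmin ▸ B.min'_le b hb, hmax ▸ B.le_max' b hb⟩
  have hm : 0 < m := hmin ▸ hmax ▸ B.min'_lt_max'_of_card (by omega)
  have hunion : ∀ b ∈ B, #((b +ᵥ A) ∪ (A ∪ (m +ᵥ A))) ≤ 2 * #A - 1 := fun b hb => by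
    have := hyp b hb 0 h0 m hmB
    rw [add_comm, insert_eq, insert_eq, union_add, union_add, singleton_add, singleton_add,
      singleton_add, zero_vadd] at this
    omega
  have hU := card_union_vadd_eq_two_mul_sub_one hBI h0 hmB hm hcard hunion
  have hsub : A + B ⊆ A ∪ (m +ᵥ A) := add_subset_of_card_vadd_union_le fun b hb => hU ▸ hunion b hb
  have hinter : (A ∩ (m +ᵥ A)).Nonempty := by
    have := card_union_add_card_inter A (m +ᵥ A)
    rw [card_vadd_finset] at this
    exact card_pos.1 (by omega)
  have hAB := eq_min'_vadd hA hBI h0 hmB hcard (by omega) hsub hinter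
  obtain ⟨d, hd, hBd⟩ :=
    exists_isAPZ_of_add_subset hBI h0 hmB hm (add_subset_union_vadd_of_eq_vadd hAB hsub)
  exact ⟨d, hd, hAB ▸ hBd.vadd _, hBd⟩
end

section
/- Let A and B be finite non-empty subsets of ℤ with |A| = |B|, min B = 0, max B = m. Then the average over b ∈ B \ {m} of |A + {0, b, m}| is at least |A| + |B| - 1 + max(0, ((2|π_m(A)| - m)(m - (|B| - 1)) - 1)/(|B| - 1)). -/
open Finset Pointwise

lemma stmt6_arith (K P M S Sg U : ℤ) (hk1 : 1 ≤ K) (hkm : K ≤ M) (hpm : P ≤ M) (hpa : P ≤ K+1)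
    (hS : K*U + Sg ≤ S) (hU : K+1+P ≤ U) (hSg0 : 0 ≤ Sg)
    (hSg1 : (K+1)*(M-P) - (M-K)*(K+1 - max 0 (2*P-M)) ≤ Sg) :
    K*(2*K+1) + max 0 ((2*P-M)*(M-K)-1) ≤ S := by
  have hkU : K*(K+1+P) ≤ K*U := mul_le_mul_of_nonneg_left hU (by linarith)
  have hSge : K*(K+1+P) + Sg ≤ S := by linarith
  rcases le_or_gt (2*P - M) 0 with hq | hq
  · rw [max_eq_left hq] at hSg1
    have hcorr : max 0 ((2*P-M)*(M-K)-1) = 0 := by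
      apply max_eq_left
      nlinarith
    rw [hcorr]
    rcases le_total P K with hρk | hρk
    · linarith
    · have hKK : K*K ≤ K*P := mul_le_mul_of_nonneg_left hρk (by linarith)
      linarith
  · rw [max_eq_right hq.le] at hSg1
    rcases le_or_gt M K with hmk | hmk
    · have hmkeq : M = K := le_antisymm hmk hkm
      subst hmkeq
      have hcorr : max 0 ((2*P-M)*(M-M)-1) = 0 := by
        apply max_eq_left
        nlinarith
      rw [hcorr]
      nlinarith [hSg1, hSge, hpm]
    · have hprod : 0 < (2*P-M)*(M-K) := mul_pos (by linarith) (by linarith)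
      rcases le_total ((2*P-M)*(M-K)-1) 0 with hc | hc
      · rw [max_eq_left hc]
        linarith
      · rw [max_eq_right hc]
        linarith


theorem stmt_6 (A B : Finset ℤ) (hA : A.Nonempty) (hB : B.Nonempty) (m : ℕ) (hm : 0 < m)
    (hcard : A.card = B.card)
    (hmin : B.min' hB = 0) (hmax : B.max' hB = (m : ℤ)) :
    (A.card : ℝ) + B.card - 1
      + max 0 (((2 * ((A.image (fun x : ℤ => (x : ZMod m))).card : ℝ) - m)
          * ((m : ℝ) - ((B.card : ℝ) - 1)) - 1) / ((B.card : ℝ) - 1))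
      ≤ (∑ b ∈ B.erase (m : ℤ),
          ((A + ({0, b, (m : ℤ)} : Finset ℤ)).card : ℝ)) / (B.erase (m : ℤ)).card := by
  haveI : NeZero m := ⟨hm.ne'⟩
  classical
  have hmB : (m : ℤ) ∈ B := hmax ▸ B.max'_mem hB
  have h0B : (0 : ℤ) ∈ B := hmin ▸ B.min'_mem hB
  have hm0 : (0:ℤ) ≠ (m:ℤ) := by
    have : (0:ℤ) < (m:ℤ) := by exact_mod_cast hm
    exact this.ne
  have h0B' : (0:ℤ) ∈ B.erase (m:ℤ) := mem_erase.mpr ⟨hm0, h0B⟩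
  set B' : Finset ℤ := B.erase (m:ℤ) with hB'def
  set k := B'.card with hkdef
  have hkpos : 0 < k := card_pos.mpr ⟨0, h0B'⟩
  have hkB : B.card = k + 1 := (card_erase_add_one hmB).symm
  have hAk : A.card = k + 1 := hcard.trans hkB
  have hbmem : ∀ b ∈ B', 0 ≤ b ∧ b < (m:ℤ) := by
    intro b hb
    have hbB := mem_of_mem_erase hb
    refine ⟨hmin ▸ B.min'_le b hbB, lt_of_le_of_ne (hmax ▸ B.le_max' b hbB) (ne_of_mem_erase hb)⟩
  set R : Finset (ZMod m) := A.image (fun x : ℤ => (x : ZMod m)) with hRdef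
  set ρ := R.card with hρdef
  set U : Finset ℤ := A ∪ A.image (fun a => a + (m:ℤ)) with hUdef
  set g : ZMod m → ℕ := fun β => (A.filter (fun a : ℤ => ¬ ((a : ZMod m) + β ∈ R))).card with hgdef
  -- membership of U in R mod m
  have hmcast : ((m:ℤ) : ZMod m) = 0 := by
    push_cast
    exact ZMod.natCast_self m
  have memR : ∀ x ∈ U, (x : ZMod m) ∈ R := by
    intro x hx
    rcases mem_union.mp hx with h | h
    · exact mem_image_of_mem _ h
    · obtain ⟨a, ha, rfl⟩ := mem_image.mp h
      have : ((a + (m:ℤ) : ℤ) : ZMod m) = (a : ZMod m) := by push_cast [ZMod.natCast_self]; ring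
      rw [this]
      exact mem_image_of_mem _ ha
  -- L1 : per-b lower bound
  have L1 : ∀ b ∈ B', U.card + g (b : ZMod m) ≤ (A + ({0, b, (m:ℤ)} : Finset ℤ)).card := by
    intro b _
    set V : Finset ℤ := (A.filter (fun a : ℤ => ¬ ((a : ZMod m) + (b : ZMod m) ∈ R))).image (fun a => a + b) with hVdef
    have hVcard : V.card = g (b : ZMod m) := card_image_of_injective _ (add_left_injective b)
    have hUsub : U ⊆ A + ({0, b, (m:ℤ)} : Finset ℤ) := by
      intro x hx
      rcases mem_union.mp hx with h | h
      · have := add_mem_add h (show (0:ℤ) ∈ ({0, b, (m:ℤ)} : Finset ℤ) by simp)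
        simpa using this
      · obtain ⟨a, ha, rfl⟩ := mem_image.mp h
        exact add_mem_add ha (by simp)
    have hVsub : V ⊆ A + ({0, b, (m:ℤ)} : Finset ℤ) := by
      intro x hx
      obtain ⟨a, ha, rfl⟩ := mem_image.mp hx
      exact add_mem_add (mem_of_mem_filter a ha) (by simp)
    have hdisj : Disjoint U V := by
      rw [disjoint_right]
      intro x hxV hxU
      obtain ⟨a, ha, rfl⟩ := mem_image.mp hxV
      have h1 := (mem_filter.mp ha).2
      apply h1
      have : ((a + b : ℤ) : ZMod m) = (a : ZMod m) + (b : ZMod m) := by push_cast; ring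
      rw [← this]
      exact memR _ hxU
    calc U.card + g (b : ZMod m) = (U ∪ V).card := by
          rw [card_union_of_disjoint hdisj, hVcard]
    _ ≤ _ := card_le_card (union_subset hUsub hVsub)
  -- L2 : U.card ≥ A.card + ρ
  have L2 : A.card + ρ ≤ U.card := by
    set W : Finset ℤ := A.filter (fun a => ∀ a' ∈ A, (a' : ZMod m) = (a : ZMod m) → a' ≤ a) with hWdef
    have hWinj : Set.InjOn (fun a : ℤ => (a : ZMod m)) W := by
      intro a1 h1 a2 h2 he
      simp only [Finset.mem_coe] at h1 h2
      have p1 := mem_filter.mp h1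
      have p2 := mem_filter.mp h2
      simp only at he
      exact le_antisymm (p2.2 a1 p1.1 he) (p1.2 a2 p2.1 he.symm)
    have hWim : W.image (fun a : ℤ => (a : ZMod m)) = R := by
      apply subset_antisymm
      · exact image_subset_image (filter_subset _ _)
      · intro r hr
        obtain ⟨a, ha, rfl⟩ := mem_image.mp hr
        set C : Finset ℤ := A.filter (fun x => (x : ZMod m) = (a : ZMod m)) with hCdef
        have hCne : C.Nonempty := ⟨a, mem_filter.mpr ⟨ha, rfl⟩⟩
        have hmaxC := C.max'_mem hCne
        have hmc := mem_filter.mp hmaxC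
        refine mem_image.mpr ⟨C.max' hCne, mem_filter.mpr ⟨hmc.1, ?_⟩, hmc.2⟩
        intro a' ha' he'
        exact C.le_max' a' (mem_filter.mpr ⟨ha', he'.trans hmc.2⟩)
    have hWcard : W.card = ρ := by
      rw [hρdef, ← hWim, card_image_of_injOn hWinj]
    have hdisj2 : Disjoint A (W.image (fun a => a + (m:ℤ))) := by
      rw [disjoint_right]
      intro x hxI hxA
      obtain ⟨a, ha, rfl⟩ := mem_image.mp hxI
      have p := mem_filter.mp ha
      have : a + (m:ℤ) ≤ a := p.2 _ hxA (by push_cast [ZMod.natCast_self]; ring)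
      have hm' : (0:ℤ) < (m:ℤ) := by exact_mod_cast hm
      omega
    have hsub : A ∪ W.image (fun a => a + (m:ℤ)) ⊆ U := by
      apply union_subset subset_union_left
      exact (image_subset_image (filter_subset _ _)).trans subset_union_right
    calc A.card + ρ = (A ∪ W.image (fun a => a + (m:ℤ))).card := by
          rw [card_union_of_disjoint hdisj2, card_image_of_injective _ (add_left_injective _), hWcard]
    _ ≤ U.card := card_le_card hsub
  -- ρ bounds
  have hρm : ρ ≤ m := by
    have := card_le_univ R
    rwa [ZMod.card] at this
  have hρA : ρ ≤ k + 1 := hAk ▸ card_image_le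
  -- L3 : total sum of g
  have per_a : ∀ a : ℤ, ((univ : Finset (ZMod m)).filter (fun β => (a : ZMod m) + β ∈ R)).card = ρ := by
    intro a
    have heq : (univ : Finset (ZMod m)).filter (fun β => (a : ZMod m) + β ∈ R)
        = R.image (fun r => r - (a : ZMod m)) := by
      ext β
      simp only [mem_filter, mem_univ, true_and, mem_image]
      constructor
      · intro h; exact ⟨(a : ZMod m) + β, h, by ring⟩
      · rintro ⟨r, hr, rfl⟩; simpa using hr
    rw [heq, card_image_of_injective _ sub_left_injective]
  have per_a' : ∀ a : ℤ, ((univ : Finset (ZMod m)).filter (fun β => (a : ZMod m) + β ∉ R)).card = m - ρ := by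
    intro a
    have h2 := Finset.card_filter_add_card_filter_not
      (s := (univ : Finset (ZMod m))) (p := fun β => (a : ZMod m) + β ∈ R)
    rw [per_a a, card_univ, ZMod.card] at h2
    omega
  have L3 : ∑ β : ZMod m, g β = A.card * (m - ρ) := by
    have : ∑ β : ZMod m, g β = ∑ β : ZMod m, ∑ a ∈ A, (if (a : ZMod m) + β ∉ R then 1 else 0) := by
      apply sum_congr rfl
      intro β _
      rw [hgdef]
      simp [card_filter]
    rw [this, sum_comm]
    have : ∀ a ∈ A, (∑ β : ZMod m, (if (a : ZMod m) + β ∉ R then 1 else 0)) = m - ρ := by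
      intro a _
      rw [← card_filter]
      exact per_a' a
    rw [sum_congr rfl this, sum_const, smul_eq_mul]
  -- L4 : per-β upper bound on g
  have L4 : ∀ β : ZMod m, (g β : ℤ) + max 0 (2*(ρ:ℤ) - m) ≤ A.card := by
    intro β
    have hsplit := Finset.card_filter_add_card_filter_not
      (s := A) (p := fun a : ℤ => (a : ZMod m) + β ∈ R)
    set I : Finset (ZMod m) := R.filter (fun s => s + β ∈ R) with hIdef
    have hI1 : I.card ≤ (A.filter (fun a : ℤ => (a : ZMod m) + β ∈ R)).card := by
      apply card_le_card_of_surjOn (fun a : ℤ => (a : ZMod m))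
      intro s hs
      simp only [Finset.mem_coe] at hs
      have hs' := mem_filter.mp hs
      obtain ⟨a, ha, rfl⟩ := mem_image.mp hs'.1
      refine ⟨a, ?_, rfl⟩
      simp only [Finset.mem_coe, mem_filter]
      exact ⟨ha, hs'.2⟩
    have hI2 : 2*(ρ:ℤ) - m ≤ I.card := by
      have him : (R.image (fun s => s - β)).card = ρ := card_image_of_injective _ sub_left_injective
      have hIeq : I = R ∩ R.image (fun s => s - β) := by
        ext s
        simp only [hIdef, mem_filter, mem_inter, mem_image]
        constructor
        · rintro ⟨hsR, h⟩; exact ⟨hsR, s + β, h, by ring⟩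
        · rintro ⟨hsR, r, hr, rfl⟩; exact ⟨hsR, by simpa using hr⟩
      have h3 := card_inter_add_card_union R (R.image (fun s => s - β))
      have h4 : (R ∪ R.image (fun s => s - β)).card ≤ m := by
        have := card_le_univ (R ∪ R.image (fun s => s - β))
        rwa [ZMod.card] at this
      rw [← hIeq, him] at h3
      omega
    have hg : g β + (A.filter (fun a : ℤ => (a : ZMod m) + β ∈ R)).card = A.card := by
      simp only [hgdef]
      omega
    rcases le_total (2*(ρ:ℤ) - m) 0 with h | h
    · rw [max_eq_left h]; omega
    · rw [max_eq_right h]; omega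
  -- injectivity of cast on B'
  have hinjB : Set.InjOn (fun b : ℤ => (b : ZMod m)) B' := by
    intro b1 h1 b2 h2 he
    simp only [Finset.mem_coe] at h1 h2
    obtain ⟨p1, q1⟩ := hbmem b1 h1
    obtain ⟨p2, q2⟩ := hbmem b2 h2
    have e1 : ((b1 : ZMod m)).val = b1.toNat := by
      have hb1 : (b1 : ZMod m) = ((b1.toNat : ℕ) : ZMod m) := by
        rw [← Int.cast_natCast]; congr 1; omega
      rw [hb1, ZMod.val_cast_of_lt (by omega)]
    have e2 : ((b2 : ZMod m)).val = b2.toNat := by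
      have hb2 : (b2 : ZMod m) = ((b2.toNat : ℕ) : ZMod m) := by
        rw [← Int.cast_natCast]; congr 1; omega
      rw [hb2, ZMod.val_cast_of_lt (by omega)]
    simp only at he
    have : b1.toNat = b2.toNat := by rw [← e1, ← e2, he]
    omega
  set Bz : Finset (ZMod m) := B'.image (fun b : ℤ => (b : ZMod m)) with hBzdef
  have hBzcard : Bz.card = k := card_image_of_injOn hinjB
  have hkm : k ≤ m := by
    rw [← hBzcard]
    have := card_le_univ Bz
    rwa [ZMod.card] at this
  have hsumtrans : ∑ b ∈ B', g ((b : ℤ) : ZMod m) = ∑ β ∈ Bz, g β := by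
    rw [hBzdef, sum_image (fun x hx y hy h => hinjB hx hy h)]
  have hsplitsum : ∑ β ∈ Bz, g β + ∑ β ∈ univ \ Bz, g β = ∑ β : ZMod m, g β := by
    rw [← sum_union (disjoint_sdiff)]
    congr 1
    exact union_sdiff_of_subset (subset_univ _)
  have hcomp : (univ \ Bz).card = m - k := by
    rw [card_sdiff_of_subset (subset_univ _), card_univ, ZMod.card, hBzcard]
  have hcompbound : (∑ β ∈ univ \ Bz, (g β : ℤ)) ≤ ((m:ℤ) - k) * ((k+1 : ℤ) - max 0 (2*(ρ:ℤ) - m)) := by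
    calc (∑ β ∈ univ \ Bz, (g β : ℤ))
        ≤ (univ \ Bz).card • ((k+1 : ℤ) - max 0 (2*(ρ:ℤ) - m)) := by
          apply sum_le_card_nsmul
          intro β _
          have := L4 β
          rw [hAk] at this
          push_cast at this ⊢
          linarith
    _ = ((m:ℤ) - k) * ((k+1 : ℤ) - max 0 (2*(ρ:ℤ) - m)) := by
          rw [hcomp, nsmul_eq_mul]
          congr 1
          push_cast [Nat.cast_sub hkm]
          ring
  -- lower bound on the partial sum of g
  have hSig1 : ((k:ℤ)+1) * ((m:ℤ) - ρ) - ((m:ℤ) - k) * ((k+1:ℤ) - max 0 (2*(ρ:ℤ) - m))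
      ≤ ((∑ b ∈ B', g ((b:ℤ) : ZMod m) : ℕ) : ℤ) := by
    have hN0 : (∑ β ∈ Bz, g β) + ∑ β ∈ univ \ Bz, g β = (k+1) * (m - ρ) := by
      rw [hsplitsum, L3, hAk]
    zify [hρm] at hN0
    have hcomp' : ((∑ β ∈ univ \ Bz, g β : ℕ) : ℤ) ≤ ((m:ℤ) - k) * ((k+1 : ℤ) - max 0 (2*(ρ:ℤ) - m)) := by
      rw [Nat.cast_sum]; exact hcompbound
    rw [hsumtrans, Nat.cast_sum]
    push_cast at hN0 hcomp' ⊢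
    linarith [hN0, hcomp']
  have hS1 : k * U.card + ∑ b ∈ B', g ((b:ℤ) : ZMod m)
      ≤ ∑ b ∈ B', (A + ({0, b, (m:ℤ)} : Finset ℤ)).card := by
    calc k * U.card + ∑ b ∈ B', g ((b:ℤ) : ZMod m)
        = ∑ b ∈ B', (U.card + g ((b:ℤ) : ZMod m)) := by
          rw [sum_add_distrib, sum_const, smul_eq_mul]
    _ ≤ _ := sum_le_sum L1
  have key : (k : ℤ) * (2*k+1) + max 0 ((2*(ρ:ℤ) - m) * ((m:ℤ) - k) - 1)
      ≤ ((∑ b ∈ B', (A + ({0, b, (m:ℤ)} : Finset ℤ)).card : ℕ) : ℤ) := by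
    have hScast : (k : ℤ) * (U.card : ℤ) + ((∑ b ∈ B', g ((b:ℤ) : ZMod m) : ℕ) : ℤ)
        ≤ ((∑ b ∈ B', (A + ({0, b, (m:ℤ)} : Finset ℤ)).card : ℕ) : ℤ) := by
      exact_mod_cast hS1
    have hU2 : ((k:ℤ)+1) + ρ ≤ (U.card : ℤ) := by
      have h := L2; rw [hAk] at h; exact_mod_cast h
    have hSigpos : (0:ℤ) ≤ ((∑ b ∈ B', g ((b:ℤ) : ZMod m) : ℕ) : ℤ) := Int.natCast_nonneg _
    have hk1 : (1:ℤ) ≤ k := by exact_mod_cast hkpos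
    have hkm' : (k:ℤ) ≤ m := by exact_mod_cast hkm
    have hρm' : (ρ:ℤ) ≤ m := by exact_mod_cast hρm
    have hρA' : (ρ:ℤ) ≤ k + 1 := by exact_mod_cast hρA
    exact stmt6_arith k ρ m _ _ _ hk1 hkm' hρm' hρA' hScast hU2 hSigpos hSig1
  -- final real-number computation
  have hk0 : (0:ℝ) < (k:ℝ) := by exact_mod_cast hkpos
  have keyR : ((k : ℝ) * (2*(k:ℝ)+1) + max 0 ((2*(ρ:ℝ) - (m:ℝ)) * ((m:ℝ) - (k:ℝ)) - 1))
      ≤ ∑ b ∈ B', ((A + ({0, b, (m:ℤ)} : Finset ℤ)).card : ℝ) := by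
    have h2 : (((k : ℤ) * (2*k+1) + max 0 ((2*(ρ:ℤ) - m) * ((m:ℤ) - k) - 1) : ℤ) : ℝ)
        ≤ (((∑ b ∈ B', (A + ({0, b, (m:ℤ)} : Finset ℤ)).card : ℕ) : ℤ) : ℝ) := by
      exact_mod_cast key
    have e1 : (((k : ℤ) * (2*k+1) + max 0 ((2*(ρ:ℤ) - m) * ((m:ℤ) - k) - 1) : ℤ) : ℝ)
        = ((k : ℝ) * (2*(k:ℝ)+1) + max 0 ((2*(ρ:ℝ) - (m:ℝ)) * ((m:ℝ) - (k:ℝ)) - 1)) := by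
      push_cast
      ring_nf
    have e2 : (((∑ b ∈ B', (A + ({0, b, (m:ℤ)} : Finset ℤ)).card : ℕ) : ℤ) : ℝ)
        = ∑ b ∈ B', ((A + ({0, b, (m:ℤ)} : Finset ℤ)).card : ℝ) := by
      push_cast
      rfl
    rw [e1, e2] at h2
    exact h2
  rw [hkB, hAk]
  push_cast
  rw [show ((k:ℝ) + 1) - 1 = (k:ℝ) from by ring, le_div_iff₀ hk0]
  have hmm : max 0 (((2 * (ρ:ℝ) - m) * ((m:ℝ) - k) - 1) / (k:ℝ)) * (k:ℝ)
      = max 0 ((2 * (ρ:ℝ) - m) * ((m:ℝ) - k) - 1) := by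
    rw [max_mul_of_nonneg _ _ hk0.le, zero_mul, div_mul_cancel₀ _ hk0.ne']
  calc ((k:ℝ) + 1 + ((k:ℝ) + 1) - 1 + max 0 (((2 * (ρ:ℝ) - m) * ((m:ℝ) - k) - 1) / (k:ℝ))) * (k:ℝ)
      = (k:ℝ) * (2*(k:ℝ)+1) + max 0 (((2 * (ρ:ℝ) - m) * ((m:ℝ) - k) - 1) / (k:ℝ)) * (k:ℝ) := by
        ring
  _ = (k:ℝ) * (2*(k:ℝ)+1) + max 0 ((2 * (ρ:ℝ) - m) * ((m:ℝ) - k) - 1) := by rw [hmm]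
  _ ≤ ∑ b ∈ B', ((A + ({0, b, (m:ℤ)} : Finset ℤ)).card : ℝ) := keyR
end

section
/- Let p be a prime, A, B finite non-empty subsets of ℤ/pℤ with |A + B| = |A| + |B| - 1 ≤ p - 2 and |A|, |B| ≥ 2. Then A and B are arithmetic progressions with the same common difference. -/
open Finset Pointwise

/-- A finite subset of `ZMod p` is an arithmetic progression with common difference `d`. -/
def IsAPZMod {p : ℕ} (S : Finset (ZMod p)) (d : ZMod p) : Prop :=
  ∃ x : ZMod p, S = (Finset.range S.card).image (fun i : ℕ => x + (i : ℕ) • d)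

/-!
Hamidoune's isoperimetric argument, driven by Cauchy–Davenport. Fix `B` and call `X` a fragment
when `(X, B)` is a critical pair; let `H` be a fragment of least size. The map
`X ↦ -(X + B)ᶜ` sends fragments to fragments, which gives `2|H| + |B| ≤ p + 1`; then submodularity
of `X ↦ |X + B|` makes `H ∩ (g + H)` a smaller fragment unless it has at most one element.
If `|H| = 2`, the equation `|H + B| = |B| + 1` says that `B` is a progression. Otherwise `H` is a
Sidon set, so the additive energy of `(H, B)` is small and Cauchy–Schwarz forces `|H| < |B|`;
a Dyson e-transform of `(H, B)` gives a critical pair `(X, Y)` with `X + Y = H + B` and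
`|Y| < |B|`, and by induction `H + B`, hence `B`, is a progression. Finally, if one set of a
critical pair is a progression of difference `d`, Cauchy–Davenport gives `|A ∪ (d + A)| = |A| + 1`
for the other one, which is therefore a progression of difference `d` too.
-/

open scoped Combinatorics.Additive

def arithProg {α : Type*} [DecidableEq α] [AddMonoid α] (x d : α) (k : ℕ) : Finset α :=
  (range k).image fun i => x + i • d

theorem Finset.eq_range_card_of_add_one_mem {S : Finset ℕ} (h : ∀ i, i + 1 ∈ S → i ∈ S) :
    S = range #S := by
  have hdown : ∀ k ∈ S, range (k + 1) ⊆ S := by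
    intro k hk
    induction k with
    | zero => simpa using hk
    | succ k ih => rw [range_add_one]; exact insert_subset hk (ih (h k hk))
  refine eq_of_subset_of_card_le (fun k hk => ?_) (by simp)
  simpa using card_le_card (hdown k hk)

section AddCommGroup

variable {α : Type*} [DecidableEq α] [AddCommGroup α]

theorem arithProg_two (x d : α) : arithProg x d 2 = {x, x + d} := by
  simp [arithProg, range_add_one, pair_comm]

theorem arithProg_add_arithProg (x y d : α) {k l : ℕ} (hk : k ≠ 0) (hl : l ≠ 0) :
    arithProg x d k + arithProg y d l = arithProg (x + y) d (k + l - 1) := by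
  ext z
  simp only [arithProg, mem_add, mem_image, mem_range]
  constructor
  · rintro ⟨_, ⟨i, hi, rfl⟩, _, ⟨j, hj, rfl⟩, rfl⟩
    exact ⟨i + j, by omega, by rw [add_nsmul]; abel⟩
  · rintro ⟨m, hm, rfl⟩
    refine ⟨_, ⟨min m (k - 1), by omega, rfl⟩, _, ⟨m - min m (k - 1), by omega, rfl⟩, ?_⟩
    rw [add_add_add_comm, ← add_nsmul, Nat.add_sub_cancel' (min_le_left _ _)]

theorem exists_one_lt_card_addDysonETransform_snd {s t : Finset α} (h : #(s + t) < #s * #t) :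
    ∃ e, 1 < #(addDysonETransform e (s, t)).2 := by
  have hnot : ¬ Set.InjOn (fun q : α × α => q.1 + q.2) (s ×ˢ t : Set (α × α)) :=
    fun hinj => h.ne (card_add_iff.2 hinj)
  simp only [Set.InjOn, Set.mem_prod, mem_coe, not_forall] at hnot
  obtain ⟨⟨a, b⟩, ⟨ha, hb⟩, ⟨a', b'⟩, ⟨ha', hb'⟩, hab, hne⟩ := hnot
  have hbb : b ≠ b' := by
    rintro rfl
    exact hne (by simpa using hab)
  refine ⟨a' - b, one_lt_card.2 ⟨b, ?_, b', ?_, hbb⟩⟩ <;>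
    simp only [addDysonETransform_snd, mem_inter, mem_vadd_finset, vadd_eq_add]
  · exact ⟨hb, a', ha', by abel⟩
  · exact ⟨hb', a, ha, by simp only at hab; linear_combination (norm := abel) hab⟩

theorem addEnergy_le_of_card_inter_vadd_le_one {s : Finset α} (t : Finset α)
    (hs : ∀ g ≠ (0 : α), #(s ∩ (g +ᵥ s)) ≤ 1) : E[s, t] ≤ #t * (#s + #t - 1) := by
  rw [addEnergy_eq_card_filter]
  set Q := {x ∈ (s ×ˢ t) ×ˢ s ×ˢ t | x.1.1 + x.1.2 = x.2.1 + x.2.2}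
  have hQ {a₁ b₁ a₂ b₂ : α} : ((a₁, b₁), (a₂, b₂)) ∈ Q ↔
      (a₁ ∈ s ∧ b₁ ∈ t) ∧ (a₂ ∈ s ∧ b₂ ∈ t) ∧ a₁ + b₁ = a₂ + b₂ := by
    simp [Q, and_assoc]
  have hdiag : #{x ∈ Q | x.1 = x.2} ≤ #(s ×ˢ t) := by
    refine card_le_card_of_injOn Prod.fst ?_ fun x hx y hy hxy => ?_
    · rintro ⟨⟨a₁, b₁⟩, a₂, b₂⟩ hx
      simp only [mem_coe, mem_filter, hQ] at hx
      simpa using hx.1.1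
    · simp only [mem_coe, mem_filter] at hx hy
      exact Prod.ext hxy (by rw [← hx.2, ← hy.2, hxy])
  -- Off the diagonal, `(b₁, b₂)` determines the quadruple: `a₁ ∈ s ∩ ((b₂ - b₁) +ᵥ s)`.
  have hoff : #{x ∈ Q | x.1 ≠ x.2} ≤ #t.offDiag := by
    refine card_le_card_of_injOn (fun x => (x.1.2, x.2.2)) ?_ ?_
    · rintro ⟨⟨a₁, b₁⟩, a₂, b₂⟩ hx
      simp only [mem_coe, mem_filter, hQ] at hx
      obtain ⟨⟨⟨-, hb₁⟩, ⟨-, hb₂⟩, hab⟩, hne⟩ := hx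
      refine mem_offDiag.2 ⟨hb₁, hb₂, fun hb => hne ?_⟩
      simp only at hb
      subst hb
      simpa using hab
    · rintro ⟨⟨a₁, b₁⟩, a₂, b₂⟩ hx ⟨⟨a₁', b₁'⟩, a₂', b₂'⟩ hy hxy
      simp only [Prod.mk.injEq] at hxy
      obtain ⟨rfl, rfl⟩ := hxy
      simp only [mem_coe, mem_filter, hQ] at hx hy
      obtain ⟨⟨⟨ha₁, -⟩, ⟨ha₂, -⟩, hab⟩, hne⟩ := hx
      obtain ⟨⟨⟨ha₁', -⟩, ⟨ha₂', -⟩, hab'⟩, -⟩ := hy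
      have hmem {a a' : α} (ha : a ∈ s) (ha' : a' ∈ s) (h : a + b₁ = a' + b₂) :
          a ∈ s ∩ ((b₂ - b₁) +ᵥ s) :=
        mem_inter.2 ⟨ha, mem_vadd_finset.2
          ⟨a', ha', by rw [vadd_eq_add]; linear_combination (norm := abel) -h⟩⟩
      have hb : b₂ - b₁ ≠ 0 := by
        refine sub_ne_zero.2 fun hb => hne ?_
        subst hb
        simp [add_right_cancel hab]
      have h₁ : a₁ = a₁' := card_le_one.1 (hs _ hb) _ (hmem ha₁ ha₂ hab) _ (hmem ha₁' ha₂' hab')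
      subst h₁
      simpa using add_right_cancel (hab.symm.trans hab')
  calc #Q = #{x ∈ Q | x.1 = x.2} + #{x ∈ Q | x.1 ≠ x.2} :=
        (card_filter_add_card_filter_not _).symm
    _ ≤ #s * #t + (#t * #t - #t) := by rw [← card_product, ← offDiag_card]; gcongr
    _ = #t * (#s + #t - 1) := by
        have := Nat.le_mul_self #t
        rw [Nat.mul_sub_one, mul_add, mul_comm #t #s]
        omega

end AddCommGroup

section ZMod

variable {p : ℕ}

theorem IsAPZMod.add {X Y : Finset (ZMod p)} {d : ZMod p} (hX : IsAPZMod X d) (hY : IsAPZMod Y d)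
    (hX₀ : X.Nonempty) (hY₀ : Y.Nonempty) (h : #(X + Y) + 1 = #X + #Y) : IsAPZMod (X + Y) d := by
  obtain ⟨x, hx⟩ := hX
  obtain ⟨y, hy⟩ := hY
  refine ⟨x + y, ?_⟩
  rw [show #(X + Y) = #X + #Y - 1 by omega]
  conv_lhs => rw [hx, hy]
  exact arithProg_add_arithProg x y d hX₀.card_pos.ne' hY₀.card_pos.ne'

variable [Fact p.Prime]

theorem ZMod.card_add_card_le_card_add_add_one {s t : Finset (ZMod p)} (hs : s.Nonempty)
    (ht : t.Nonempty) (h : #(s + t) < p) : #s + #t ≤ #(s + t) + 1 := by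
  have := ZMod.cauchy_davenport Fact.out hs ht
  omega

theorem ZMod.nsmul_injOn_range {d : ZMod p} (hd : d ≠ 0) :
    Set.InjOn (fun i : ℕ => i • d) (range p) := by
  intro i hi j hj hij
  simp only [coe_range, Set.mem_Iio, nsmul_eq_mul] at hi hj hij
  simpa [Nat.mod_eq_of_lt, hi, hj] using congrArg ZMod.val (mul_right_cancel₀ hd hij)

theorem ZMod.exists_lt_nsmul_eq {d : ZMod p} (hd : d ≠ 0) (z : ZMod p) : ∃ i < p, i • d = z :=
  ⟨(z / d).val, ZMod.val_lt _, by rw [nsmul_eq_mul, ZMod.natCast_zmod_val, div_mul_cancel₀ _ hd]⟩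

theorem ZMod.card_arithProg (x : ZMod p) {d : ZMod p} (hd : d ≠ 0) {k : ℕ} (hk : k ≤ p) :
    #(arithProg x d k) = k := by
  rw [arithProg, card_image_of_injOn, card_range]
  intro i hi j hj hij
  exact ZMod.nsmul_injOn_range hd (range_subset_range.2 hk hi) (range_subset_range.2 hk hj)
    (add_left_cancel hij)

theorem ZMod.eq_univ_of_subset_vadd_finset {d : ZMod p} (hd : d ≠ 0) {A : Finset (ZMod p)}
    (hA : A.Nonempty) (h : A ⊆ d +ᵥ A) : A = univ := by
  obtain ⟨a, ha⟩ := hA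
  have hpred (i : ℕ) : a - i • d ∈ A := by
    induction i with
    | zero => simpa using ha
    | succ i ih =>
      obtain ⟨b, hb, hba⟩ := mem_vadd_finset.1 (h ih)
      rwa [succ_nsmul, ← sub_sub, ← hba, vadd_eq_add, add_sub_cancel_left]
  refine eq_univ_of_forall fun z => ?_
  obtain ⟨i, -, hi⟩ := ZMod.exists_lt_nsmul_eq hd (a - z)
  simpa [hi] using hpred i

theorem isAPZMod_of_sdiff_vadd_finset_eq_singleton {d x : ZMod p} (hd : d ≠ 0)
    {A : Finset (ZMod p)} (hx : A \ (d +ᵥ A) = {x}) : IsAPZMod A d := by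
  set f : ℕ → ZMod p := fun i => x + i • d
  have hinj : Set.InjOn f (range p) := fun i hi j hj hij =>
    ZMod.nsmul_injOn_range hd hi hj (add_left_cancel hij)
  -- `x` is the only element of `A` whose predecessor `x - d` is missing.
  have hpred (i : ℕ) (hi : i + 1 < p) (hA : f (i + 1) ∈ A) : f i ∈ A := by
    by_contra hiA
    have hmem : f (i + 1) ∈ A \ (d +ᵥ A) := by
      refine mem_sdiff.2 ⟨hA, fun hd' => hiA ?_⟩
      rwa [show f (i + 1) = d +ᵥ f i by simp only [f, vadd_eq_add, succ_nsmul]; abel,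
        vadd_mem_vadd_finset_iff] at hd'
    rw [hx, mem_singleton, show x = f 0 by simp [f]] at hmem
    have := hinj (by simpa using hi) (by simpa using (Fact.out : p.Prime).pos) hmem
    omega
  set S := (range p).filter (f · ∈ A)
  have hS : S = range #S := eq_range_card_of_add_one_mem fun i hi => by
    simp only [S, mem_filter, mem_range] at hi ⊢
    exact ⟨by omega, hpred i hi.1 hi.2⟩
  have hA : A = S.image f := by
    refine Subset.antisymm (fun a ha => ?_) (by simp [S, image_subset_iff])
    obtain ⟨i, hi, hia⟩ := ZMod.exists_lt_nsmul_eq hd (a - x)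
    have hfi : f i = a := by simp only [f, hia, add_sub_cancel]
    exact mem_image.2 ⟨i, by simp [S, hi, hfi, ha], hfi⟩
  refine ⟨x, ?_⟩
  conv_rhs => rw [hA, card_image_of_injOn (hinj.mono (coe_subset.2 (filter_subset _ _))), ← hS]
  exact hA

theorem isAPZMod_of_card_add_arithProg_two_le {d y : ZMod p} (hd : d ≠ 0) {A : Finset (ZMod p)}
    (hA : A.Nonempty) (hAp : #A < p) (h : #(A + arithProg y d 2) ≤ #A + 1) : IsAPZMod A d := by
  have hshift : A + arithProg y d 2 = y +ᵥ (A ∪ (d +ᵥ A)) := by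
    ext z
    simp only [arithProg_two, mem_add, mem_insert, mem_singleton, exists_eq_or_imp, ↓existsAndEq,
      true_and, mem_vadd_finset, mem_union, vadd_eq_add]
    constructor
    · rintro ⟨a, ha, rfl | rfl⟩
      · exact ⟨a, Or.inl ha, add_comm _ _⟩
      · exact ⟨d + a, Or.inr ⟨a, ha, rfl⟩, by abel⟩
    · rintro ⟨_, ha | ⟨a, ha, rfl⟩, rfl⟩
      · exact ⟨_, ha, Or.inl (add_comm _ _)⟩
      · exact ⟨a, ha, Or.inr (by abel)⟩
  have hsdiff : #(A \ (d +ᵥ A)) ≤ 1 := by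
    have := card_sdiff_add_card A (d +ᵥ A)
    rw [hshift, card_vadd_finset] at h
    rw [card_vadd_finset] at this
    omega
  rcases Nat.le_one_iff_eq_zero_or_eq_one.1 hsdiff with h₀ | h₁
  · have := ZMod.eq_univ_of_subset_vadd_finset hd hA
      (sdiff_eq_empty_iff_subset.1 (card_eq_zero.1 h₀))
    simp [this] at hAp
  · obtain ⟨x, hx⟩ := card_eq_one.1 h₁
    exact isAPZMod_of_sdiff_vadd_finset_eq_singleton hd hx

/-- Vosper's hypotheses `|A + B| = |A| + |B| - 1 ≤ p - 2`, `|A|, |B| ≥ 2`, without truncated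
subtraction. -/
structure IsCriticalPair (A B : Finset (ZMod p)) : Prop where
  two_le_card_left : 2 ≤ #A
  two_le_card_right : 2 ≤ #B
  card_add_add_one : #(A + B) + 1 = #A + #B
  card_add_add_two_le : #(A + B) + 2 ≤ p

namespace IsCriticalPair

variable {A B X Y : Finset (ZMod p)} {d : ZMod p}

theorem nonempty_left (h : IsCriticalPair A B) : A.Nonempty :=
  card_pos.1 (by have := h.two_le_card_left; omega)

theorem nonempty_right (h : IsCriticalPair A B) : B.Nonempty :=
  card_pos.1 (by have := h.two_le_card_right; omega)

theorem card_add_lt (h : IsCriticalPair A B) : #(A + B) < p := by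
  have := h.card_add_add_two_le; omega

theorem card_left_lt (h : IsCriticalPair A B) : #A < p :=
  (card_le_card_add_right h.nonempty_right).trans_lt h.card_add_lt

theorem card_right_lt (h : IsCriticalPair A B) : #B < p :=
  (card_le_card_add_left h.nonempty_left).trans_lt h.card_add_lt

theorem vadd_left (h : IsCriticalPair X B) (g : ZMod p) : IsCriticalPair (g +ᵥ X) B := by
  have hg : #((g +ᵥ X) + B) = #(X + B) := by rw [vadd_add_assoc, card_vadd_finset]
  refine ⟨?_, h.two_le_card_right, ?_, hg ▸ h.card_add_add_two_le⟩
  · rw [card_vadd_finset]; exact h.two_le_card_left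
  · rw [hg, card_vadd_finset]; exact h.card_add_add_one

theorem inter (hX : IsCriticalPair X B) (hY : IsCriticalPair Y B) (h₂ : 2 ≤ #(X ∩ Y))
    (hp : #(X ∪ Y) + #B ≤ p) : IsCriticalPair (X ∩ Y) B := by
  have hsub : (X ∩ Y) + B ⊆ (X + B) ∩ (Y + B) := inter_add_subset
  have hI := card_le_card hsub
  have hIX := card_le_card (hsub.trans inter_subset_left)
  have hXY := card_union_add_card_inter X Y
  have hXYB := card_union_add_card_inter (X + B) (Y + B)
  have hX₁ := hX.card_add_add_one
  have hY₁ := hY.card_add_add_one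
  have hX₂ := hX.card_add_add_two_le
  have hI₀ : (X ∩ Y).Nonempty := card_pos.1 (by omega)
  have hcdI := ZMod.card_add_card_le_card_add_add_one hI₀ hX.nonempty_right (by omega)
  have hcdU := ZMod.card_add_card_le_card_add_add_one (hI₀.mono inter_subset_union)
    hX.nonempty_right (by rw [union_add]; omega)
  rw [union_add] at hcdU
  exact ⟨h₂, hX.two_le_card_right, by omega, by omega⟩

theorem exists_dual (h : IsCriticalPair X B) :
    ∃ C, IsCriticalPair C B ∧ #C + #X + #B = p + 1 := by
  set C := -(X + B)ᶜ
  have hXp : #X ≤ p := by simpa using card_le_univ X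
  have hXBp := h.card_add_lt
  have hC : #C + #(X + B) = p := by rw [card_neg, card_compl, ZMod.card]; omega
  have hsub : C + B ⊆ (-X)ᶜ := by
    rintro _ hw
    obtain ⟨_, hc, b, hb, rfl⟩ := mem_add.1 hw
    obtain ⟨z, hz, rfl⟩ := mem_neg.1 hc
    refine mem_compl.2 fun hx => mem_compl.1 hz ?_
    obtain ⟨x, hx, hxz⟩ := mem_neg.1 hx
    rw [show z = x + b by linear_combination (norm := abel) hxz]
    exact add_mem_add hx hb
  have hCB : #(C + B) + #X ≤ p := by
    have := card_le_card hsub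
    rw [card_compl, card_neg, ZMod.card] at this
    omega
  have := h.two_le_card_left
  have := h.card_add_add_one
  have := h.card_add_add_two_le
  have hC₀ : C.Nonempty := card_pos.1 (by omega)
  have hcd := ZMod.card_add_card_le_card_add_add_one hC₀ h.nonempty_right (by omega)
  exact ⟨C, ⟨by omega, h.two_le_card_right, by omega, by omega⟩, by omega⟩

theorem isAPZMod_left (h : IsCriticalPair A B) (hd : d ≠ 0) (hB : IsAPZMod B d) :
    IsAPZMod A d := by
  obtain ⟨y, hy : B = arithProg y d #B⟩ := hB
  have hB₂ := h.two_le_card_right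
  set E := arithProg 0 d (#B - 1)
  have hE : #E = #B - 1 := ZMod.card_arithProg 0 hd (by have := h.card_right_lt; omega)
  have hAB : A + B = (A + arithProg y d 2) + E := by
    rw [add_assoc, arithProg_add_arithProg _ _ _ two_ne_zero (by omega), add_zero,
      show 2 + (#B - 1) - 1 = #B by omega, ← hy]
  have hA' : (A + arithProg y d 2).Nonempty :=
    h.nonempty_left.add ⟨y, by simp [arithProg_two]⟩
  have hcd := ZMod.card_add_card_le_card_add_add_one hA' (card_pos.1 (by omega : 0 < #E))
    (hAB ▸ h.card_add_lt)
  rw [← hAB, hE] at hcd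
  have := h.card_add_add_one
  exact isAPZMod_of_card_add_arithProg_two_le (y := y) hd h.nonempty_left h.card_left_lt (by omega)

theorem isAPZMod_right_of_isAPZMod_add (h : IsCriticalPair A B) (hd : d ≠ 0)
    (hAB : IsAPZMod (A + B) d) : IsAPZMod B d := by
  obtain ⟨z, hz : A + B = arithProg z d #(A + B)⟩ := hAB
  have hp := h.card_add_add_two_le
  have hA := h.card_add_add_one
  have hext : (B + arithProg 0 d 2) + A = arithProg z d (#(A + B) + 1) := by
    calc (B + arithProg 0 d 2) + A = (A + B) + arithProg 0 d 2 := by abel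
      _ = arithProg z d #(A + B) + arithProg 0 d 2 := by rw [← hz]
      _ = _ := by
        rw [arithProg_add_arithProg _ _ _ (by have := h.two_le_card_left; omega) two_ne_zero,
          add_zero]
        rfl
  have hB' : (B + arithProg 0 d 2).Nonempty :=
    h.nonempty_right.add ⟨0, by simp [arithProg_two]⟩
  have hcd := ZMod.card_add_card_le_card_add_add_one hB' h.nonempty_left (by
    rw [hext, ZMod.card_arithProg z hd (by omega)]; omega)
  rw [hext, ZMod.card_arithProg z hd (by omega)] at hcd
  exact isAPZMod_of_card_add_arithProg_two_le (y := 0) hd h.nonempty_right h.card_right_lt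
    (by omega)

theorem exists_isAPZMod_right_of_card_left_eq_two (h : IsCriticalPair A B) (h₂ : #A = 2) :
    ∃ d ≠ 0, IsAPZMod B d := by
  obtain ⟨u, v, huv, rfl⟩ := card_eq_two.1 h₂
  have hd : v - u ≠ 0 := sub_ne_zero.2 huv.symm
  refine ⟨v - u, hd, isAPZMod_of_card_add_arithProg_two_le (y := u) hd h.nonempty_right
    h.card_right_lt ?_⟩
  have := h.card_add_add_one
  rw [arithProg_two, add_sub_cancel, add_comm]
  omega

theorem card_inter_vadd_le_one (h : IsCriticalPair A B)
    (hmin : ∀ X, IsCriticalPair X B → #A ≤ #X) (hdual : 2 * #A + #B ≤ p + 1) {g : ZMod p}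
    (hg : g ≠ 0) : #(A ∩ (g +ᵥ A)) ≤ 1 := by
  by_contra! h₂
  have hunion := card_union_add_card_inter A (g +ᵥ A)
  rw [card_vadd_finset] at hunion
  have hI := hmin _ (h.inter (h.vadd_left g) h₂ (by omega))
  have hsub : A ⊆ g +ᵥ A := inter_eq_left.1 (eq_of_subset_of_card_le inter_subset_left hI)
  have hA := ZMod.eq_univ_of_subset_vadd_finset hg h.nonempty_left hsub
  have := h.card_left_lt
  simp [hA] at this

theorem card_left_lt_card_right (h : IsCriticalPair A B) (h₃ : 3 ≤ #A)
    (hA : ∀ g ≠ (0 : ZMod p), #(A ∩ (g +ᵥ A)) ≤ 1) : #A < #B := by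
  have hAB := h.card_add_add_one
  have hB := h.two_le_card_right
  have hE : E[A, B] ≤ #B * #(A + B) := by
    simpa only [show #A + #B - 1 = #(A + B) by omega] using
      addEnergy_le_of_card_inter_vadd_le_one B hA
  have hsq : #A ^ 2 * #B ≤ #(A + B) ^ 2 := by
    refine Nat.le_of_mul_le_mul_right ?_ (by omega : 0 < #B)
    calc #A ^ 2 * #B * #B = #A ^ 2 * #B ^ 2 := by ring
      _ ≤ #(A + B) * E[A, B] := le_card_add_mul_addEnergy A B
      _ ≤ #(A + B) * (#B * #(A + B)) := by gcongr
      _ = #(A + B) ^ 2 * #B := by ring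
  by_contra! hle
  obtain hB₂ | hB₃ | hB₄ : #B = 2 ∨ #B = 3 ∨ 4 ≤ #B := by omega
  all_goals nlinarith

theorem exists_card_right_lt_of_card_left_lt (h : IsCriticalPair A B) (hlt : #A < #B) :
    ∃ X Y, IsCriticalPair X Y ∧ #Y < #B ∧ X + Y = A + B := by
  have hA := h.two_le_card_left
  have hAB := h.card_add_add_one
  obtain ⟨e, he⟩ := exists_one_lt_card_addDysonETransform_snd (s := A) (t := B) (by nlinarith)
  set X := (addDysonETransform e (A, B)).1
  set Y := (addDysonETransform e (A, B)).2
  have hsub : X + Y ⊆ A + B := addDysonETransform.subset e (A, B)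
  have hcard : #X + #Y = #A + #B := addDysonETransform.card e (A, B)
  have hYA : #Y ≤ #A := (card_le_card inter_subset_right).trans (card_vadd_finset _ _).le
  have hcd := ZMod.card_add_card_le_card_add_add_one (card_pos.1 (by omega : 0 < #X))
    (card_pos.1 (by omega : 0 < #Y)) ((card_le_card hsub).trans_lt h.card_add_lt)
  have hXY : X + Y = A + B := eq_of_subset_of_card_le hsub (by omega)
  exact ⟨X, Y, ⟨by omega, he, by rw [hXY]; omega, hXY ▸ h.card_add_add_two_le⟩, by omega, hXY⟩

theorem exists_isAPZMod (h : IsCriticalPair A B) : ∃ d ≠ 0, IsAPZMod A d ∧ IsAPZMod B d := by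
  induction hn : #B using Nat.strong_induction_on generalizing A B with
  | _ n ih =>
  suffices ∃ d ≠ 0, IsAPZMod B d by
    obtain ⟨d, hd, hB⟩ := this
    exact ⟨d, hd, h.isAPZMod_left hd hB, hB⟩
  classical
  obtain ⟨H, hH, hmin⟩ : ∃ H, IsCriticalPair H B ∧ ∀ X, IsCriticalPair X B → #H ≤ #X := by
    obtain ⟨H, hH, hmin⟩ :=
      ({X | IsCriticalPair X B} : Finset _).exists_min_image card ⟨A, by simpa using h⟩
    exact ⟨H, by simpa using hH, fun X hX => hmin X (by simpa using hX)⟩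
  obtain ⟨C, hC, hCcard⟩ := hH.exists_dual
  have hdual : 2 * #H + #B ≤ p + 1 := by have := hmin C hC; omega
  rcases (show #H = 2 ∨ 3 ≤ #H by have := hH.two_le_card_left; omega) with h₂ | h₃
  · exact hH.exists_isAPZMod_right_of_card_left_eq_two h₂
  · have hlt := hH.card_left_lt_card_right h₃ fun g hg => hH.card_inter_vadd_le_one hmin hdual hg
    obtain ⟨X, Y, hXY, hYB, hsum⟩ := hH.exists_card_right_lt_of_card_left_lt hlt
    obtain ⟨d, hd, hX, hY⟩ := ih _ (hn ▸ hYB) hXY rfl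
    refine ⟨d, hd, hH.isAPZMod_right_of_isAPZMod_add hd ?_⟩
    rw [← hsum]
    exact hX.add hY hXY.nonempty_left hXY.nonempty_right hXY.card_add_add_one

end IsCriticalPair

end ZMod

theorem stmt_19 (p : ℕ) (hp : p.Prime) (A B : Finset (ZMod p))
    (hA : 2 ≤ A.card) (hB : 2 ≤ B.card)
    (hsum : (A + B).card = A.card + B.card - 1)
    (hle : A.card + B.card - 1 ≤ p - 2) :
    ∃ d : ZMod p, d ≠ 0 ∧ IsAPZMod A d ∧ IsAPZMod B d := by
  have := Fact.mk hp
  exact IsCriticalPair.exists_isAPZMod ⟨hA, hB, by omega, by omega⟩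
end
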